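/- There is a bijection (the RSK super-correspondence) between the set M(m|n,r) and the set of pairs (S, T) of semistandard supertableaux of the same shape ν, where ν ranges over partitions of r with ν_{m+1} ≤ n, S has content λ|μ and T has content ξ|η for some λ|μ, ξ|η ∈ Λ(m|n,r). Moreover, if A corresponds to (S,T), then the transpose A^t corresponds to (T,S). -/

import Mathlib

/-- `lam` is a partition of `r`, written as a weakly decreasing function `ℕ → ℕ`
(0-indexed parts) vanishing from index `r` on. -/
def isPartitionOf (r : ℕ) (lam : ℕ → ℕ) : Prop :=
  Antitone lam ∧ (∑ i ∈ Finset.range r, lam i = r) ∧ lam r = 0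

/-- `T` is a semistandard `lam`-supertableau for the hook parameters `(m, n)`:
a filling of the Young diagram of `lam` (cells `(i,j)` with `j < lam i`, rows and
columns 0-indexed) by entries in `{1, ..., m+n}`, weakly increasing along rows and
down columns, such that entries `≤ m` are strictly increasing down columns and entries
`> m` are strictly increasing along rows. -/
def isSuperSSYT (m n : ℕ) (lam : ℕ → ℕ) (T : ℕ → ℕ → ℕ) : Prop :=
  (∀ i j, j < lam i → 1 ≤ T i j ∧ T i j ≤ m + n) ∧
  (∀ i j j', j ≤ j' → j' < lam i → T i j ≤ T i j') ∧
  (∀ i i' j, i ≤ i' → j < lam i' → T i j ≤ T i' j) ∧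
  (∀ i i' j, i < i' → j < lam i' → T i' j ≤ m → T i j < T i' j) ∧
  (∀ i j j', j < j' → j' < lam i → m < T i j → T i j < T i j')

/-- The number of cells of the diagram of `lam` (a partition of `r`) whose entry in the
tableau `T` equals `e`. -/
def entryCount (r : ℕ) (lam : ℕ → ℕ) (T : ℕ → ℕ → ℕ) (e : ℕ) : ℕ :=
  ((Finset.range r ×ˢ Finset.range r).filter
    (fun p => p.2 < lam p.1 ∧ T p.1 p.2 = e)).card

/-- The set `M(m|n,r)` of `(m+n)×(m+n)` matrices over `ℕ` with entry sum `r` whose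
entries in the off-diagonal blocks are `0` or `1`. -/
def Mmn (m n r : ℕ) : Type :=
  {A : Matrix (Fin (m + n)) (Fin (m + n)) ℕ //
    (∑ i, ∑ j, A i j = r) ∧
    ∀ i j : Fin (m + n),
      (((i : ℕ) < m ∧ ¬ (j : ℕ) < m) ∨ (¬ (i : ℕ) < m ∧ (j : ℕ) < m)) → A i j ≤ 1}

/-- Pairs `(S, T)` of semistandard supertableaux of the same `(m,n)`-hook shape `ν ⊢ r`
(tableaux normalized to vanish outside the diagram; their contents automatically lie in
`Λ(m|n,r)`). -/
def SuperPairs (m n r : ℕ) : Type :=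
  {q : (ℕ → ℕ) × (ℕ → ℕ → ℕ) × (ℕ → ℕ → ℕ) //
    isPartitionOf r q.1 ∧ q.1 m ≤ n ∧
    (∀ i j, q.1 i ≤ j → q.2.1 i j = 0) ∧ isSuperSSYT m n q.1 q.2.1 ∧
    (∀ i j, q.1 i ≤ j → q.2.2 i j = 0) ∧ isSuperSSYT m n q.1 q.2.2}



set_option linter.unusedSectionVars false
set_option linter.unusedVariables false

namespace RSKSuper

/-- weakly decreasing -/
def Anti (f : ℕ → ℕ) : Prop := ∀ k, f (k+1) ≤ f k

/-- `a ⊆ b` is a horizontal strip -/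
def HS (a b : ℕ → ℕ) : Prop := ∀ k, a k ≤ b k ∧ b (k+1) ≤ a k

/-- `a ⊆ b` is a vertical strip -/
def VS (a b : ℕ → ℕ) : Prop := ∀ k, a k ≤ b k ∧ b k ≤ a k + 1

/-- `f` vanishes from index `t` on -/
def Vn (f : ℕ → ℕ) (t : ℕ) : Prop := ∀ k, t ≤ k → f k = 0

/-- size truncated at `R` -/
def sz (R : ℕ) (f : ℕ → ℕ) : ℕ := ∑ k ∈ Finset.range R, f k

theorem Anti.le {f : ℕ → ℕ} (hf : Anti f) : ∀ {a b : ℕ}, a ≤ b → f b ≤ f a := by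
  intro a b h
  induction b with
  | zero => simp_all
  | succ b ih =>
    rcases Nat.lt_or_ge a (b+1) with h'|h'
    · exact le_trans (hf b) (ih (by omega))
    · have : a = b + 1 := by omega
      simp [this]

theorem Vn.mono {f : ℕ → ℕ} {t t' : ℕ} (h : Vn f t) (htt : t ≤ t') : Vn f t' :=
  fun k hk => h k (le_trans htt hk)

theorem sz_congr_of_vn {f : ℕ → ℕ} {t R R' : ℕ} (h : Vn f t) (h1 : t ≤ R) (h2 : t ≤ R') :
    sz R f = sz R' f := by
  wlog hle : R ≤ R' generalizing R R'
  · exact (this h2 h1 (by omega)).symm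
  unfold sz
  rw [← Finset.sum_range_add_sum_Ico _ hle]
  have : ∑ k ∈ Finset.Ico R R', f k = 0 := by
    apply Finset.sum_eq_zero
    intro k hk
    simp only [Finset.mem_Ico] at hk
    exact h k (by omega)
  omega

theorem HS.le {a b : ℕ → ℕ} (h : HS a b) : ∀ k, a k ≤ b k := fun k => (h k).1
theorem VS.le {a b : ℕ → ℕ} (h : VS a b) : ∀ k, a k ≤ b k := fun k => (h k).1

theorem Vn.of_le {f g : ℕ → ℕ} {t : ℕ} (h : Vn g t) (hle : ∀ k, f k ≤ g k) : Vn f t :=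
  fun k hk => Nat.le_zero.mp (h k hk ▸ hle k)

/-! ### The even-even local rule (classical RSK / Fomin local rule) -/

def fEE (a : ℕ) (ρ μ ν : ℕ → ℕ) : ℕ → ℕ
  | 0 => max (μ 0) (ν 0) + a
  | (k+1) => max (μ (k+1)) (ν (k+1)) + (min (μ k) (ν k) - ρ k)

def bEEa (l μ ν : ℕ → ℕ) : ℕ := l 0 - max (μ 0) (ν 0)

def bEEρ (l μ ν : ℕ → ℕ) : ℕ → ℕ :=
  fun k => min (μ k) (ν k) - (l (k+1) - max (μ (k+1)) (ν (k+1)))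

theorem fEE_symm (a : ℕ) (ρ μ ν : ℕ → ℕ) : fEE a ρ μ ν = fEE a ρ ν μ := by
  funext k
  cases k with
  | zero => simp [fEE, max_comm, min_comm]
  | succ k => simp [fEE, max_comm, min_comm]

section EEfwd
variable {a : ℕ} {ρ μ ν : ℕ → ℕ}
variable (hρ : Anti ρ) (hμ : Anti μ) (hν : Anti ν) (h1 : HS ρ μ) (h2 : HS ρ ν)
include hρ hμ hν h1 h2

theorem fEE_succ_le (k : ℕ) : fEE a ρ μ ν (k+1) ≤ min (μ k) (ν k) := by
  show max (μ (k+1)) (ν (k+1)) + (min (μ k) (ν k) - ρ k) ≤ _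
  have e1 := (h1 k).2
  have e2 := (h2 k).2
  have e3 := (h1 k).1
  have e4 := (h2 k).1
  have : max (μ (k+1)) (ν (k+1)) ≤ ρ k := by simp [e1, e2]
  omega

theorem fEE_anti : Anti (fEE a ρ μ ν) := by
  intro k
  cases k with
  | zero =>
    have := fEE_succ_le hρ hμ hν h1 h2 (a := a) 0
    show _ ≤ max (μ 0) (ν 0) + a
    have : min (μ 0) (ν 0) ≤ max (μ 0) (ν 0) := le_trans (min_le_left _ _) (le_max_left _ _)
    omega
  | succ k =>
    have hl := fEE_succ_le hρ hμ hν h1 h2 (a := a) (k+1)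
    show _ ≤ max (μ (k+1)) (ν (k+1)) + (min (μ k) (ν k) - ρ k)
    have h5 : min (μ (k+1)) (ν (k+1)) ≤ max (μ (k+1)) (ν (k+1)) :=
      le_trans (min_le_left _ _) (le_max_left _ _)
    omega

theorem fEE_hs_μ : HS μ (fEE a ρ μ ν) := by
  intro k
  constructor
  · cases k with
    | zero => show μ 0 ≤ max (μ 0) (ν 0) + a ; have := le_max_left (μ 0) (ν 0); omega
    | succ k =>
      show μ (k+1) ≤ max (μ (k+1)) (ν (k+1)) + _
      have := le_max_left (μ (k+1)) (ν (k+1)); omega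
  · exact le_trans (fEE_succ_le hρ hμ hν h1 h2 k) (min_le_left _ _)

theorem fEE_hs_ν : HS ν (fEE a ρ μ ν) := by
  rw [fEE_symm]
  exact fEE_hs_μ hρ hν hμ h2 h1

theorem fEE_vn {t : ℕ} (hvμ : Vn μ t) (hvν : Vn ν t) : Vn (fEE a ρ μ ν) (t+1) := by
  intro k hk
  obtain ⟨k, rfl⟩ : ∃ k', k = k' + 1 := ⟨k - 1, by omega⟩
  have := fEE_succ_le hρ hμ hν h1 h2 (a := a) k
  have h0 : μ k = 0 := hvμ k (by omega)
  simp [h0] at this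
  omega

theorem fEE_sz {t : ℕ} (hvμ : Vn μ t) (hvν : Vn ν t) (hvρ : Vn ρ t) {R : ℕ} (hR : t + 1 ≤ R) :
    sz R (fEE a ρ μ ν) + sz R ρ = sz R μ + sz R ν + a := by
  have hvl : Vn (fEE a ρ μ ν) (t+1) := fEE_vn hρ hμ hν h1 h2 hvμ hvν
  rw [sz_congr_of_vn hvl hR (le_refl _), sz_congr_of_vn (hvρ.mono (by omega)) hR (le_refl _),
    sz_congr_of_vn (hvμ.mono (by omega)) hR (le_refl _),
    sz_congr_of_vn (hvν.mono (by omega)) hR (le_refl _)]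
  unfold sz
  rw [Finset.sum_range_succ' (fEE a ρ μ ν)]
  have key : ∀ k, fEE a ρ μ ν (k+1) + ρ k = max (μ (k+1)) (ν (k+1)) + min (μ k) (ν k) := by
    intro k
    show max (μ (k+1)) (ν (k+1)) + (min (μ k) (ν k) - ρ k) + ρ k = _
    have : ρ k ≤ min (μ k) (ν k) := le_min (h1 k).1 (h2 k).1
    omega
  have e1 : (∑ k ∈ Finset.range t, fEE a ρ μ ν (k+1)) + ∑ k ∈ Finset.range t, ρ k
      = (∑ k ∈ Finset.range t, max (μ (k+1)) (ν (k+1))) + ∑ k ∈ Finset.range t, min (μ k) (ν k) := by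
    rw [← Finset.sum_add_distrib, ← Finset.sum_add_distrib]
    exact Finset.sum_congr rfl (fun k _ => key k)
  have e2 : ∑ k ∈ Finset.range (t+1), ρ k = ∑ k ∈ Finset.range t, ρ k := by
    rw [Finset.sum_range_succ, hvρ t (le_refl _)]
    simp
  have e3 : (∑ k ∈ Finset.range t, max (μ (k+1)) (ν (k+1))) + max (μ 0) (ν 0)
      = ∑ k ∈ Finset.range (t+1), max (μ k) (ν k) :=
    (Finset.sum_range_succ' (fun k => max (μ k) (ν k)) t).symm
  have e4 : ∑ k ∈ Finset.range t, min (μ k) (ν k) = ∑ k ∈ Finset.range (t+1), min (μ k) (ν k) := by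
    rw [Finset.sum_range_succ, hvμ t (le_refl _)]
    simp
  have e5 : (∑ k ∈ Finset.range (t+1), max (μ k) (ν k)) + ∑ k ∈ Finset.range (t+1), min (μ k) (ν k)
      = (∑ k ∈ Finset.range (t+1), μ k) + ∑ k ∈ Finset.range (t+1), ν k := by
    rw [← Finset.sum_add_distrib, ← Finset.sum_add_distrib]
    exact Finset.sum_congr rfl (fun k _ => by omega)
  show (∑ k ∈ Finset.range t, fEE a ρ μ ν (k+1)) + (max (μ 0) (ν 0) + a) + _ = _
  omega

theorem bEEa_fEE : bEEa (fEE a ρ μ ν) μ ν = a := by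
  show max (μ 0) (ν 0) + a - max (μ 0) (ν 0) = a
  omega

theorem bEEρ_fEE : bEEρ (fEE a ρ μ ν) μ ν = ρ := by
  funext k
  show min (μ k) (ν k) - (max (μ (k+1)) (ν (k+1)) + (min (μ k) (ν k) - ρ k)
    - max (μ (k+1)) (ν (k+1))) = ρ k
  have : ρ k ≤ min (μ k) (ν k) := le_min (h1 k).1 (h2 k).1
  omega

end EEfwd

section EEbwd
variable {l μ ν : ℕ → ℕ}
variable (hl : Anti l) (hμ : Anti μ) (hν : Anti ν) (h1 : HS μ l) (h2 : HS ν l)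
include hl hμ hν h1 h2

theorem bEEρ_le_min (k : ℕ) : bEEρ l μ ν k ≤ min (μ k) (ν k) := Nat.sub_le _ _

theorem bEEρ_facts (k : ℕ) :
    bEEρ l μ ν k + l (k+1) = min (μ k) (ν k) + max (μ (k+1)) (ν (k+1)) := by
  show min (μ k) (ν k) - (l (k+1) - max (μ (k+1)) (ν (k+1))) + l (k+1) = _
  have e1 : max (μ (k+1)) (ν (k+1)) ≤ l (k+1) := max_le (h1 (k+1)).1 (h2 (k+1)).1
  have e2 : l (k+1) ≤ min (μ k) (ν k) := le_min (h1 k).2 (h2 k).2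
  omega

theorem bEEρ_anti : Anti (bEEρ l μ ν) := by
  intro k
  have f1 := bEEρ_facts hl hμ hν h1 h2 k
  have f2 := bEEρ_facts hl hμ hν h1 h2 (k+1)
  have e1 : max (μ (k+2)) (ν (k+2)) ≤ l (k+2) := max_le (h1 (k+2)).1 (h2 (k+2)).1
  have e2 : l (k+2) ≤ min (μ (k+1)) (ν (k+1)) := le_min (h1 (k+1)).2 (h2 (k+1)).2
  have e3 : min (μ (k+1)) (ν (k+1)) ≤ max (μ (k+1)) (ν (k+1)) :=
    le_trans (min_le_left _ _) (le_max_left _ _)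
  have e4 : l (k+1) ≤ min (μ k) (ν k) := le_min (h1 k).2 (h2 k).2
  have ee : k + 1 + 1 = k + 2 := rfl
  rw [ee] at f2
  omega

theorem bEEρ_hs_μ : HS (bEEρ l μ ν) μ := by
  intro k
  constructor
  · exact le_trans (bEEρ_le_min hl hμ hν h1 h2 k) (min_le_left _ _)
  · have f1 := bEEρ_facts hl hμ hν h1 h2 k
    have e2 : l (k+1) ≤ min (μ k) (ν k) := le_min (h1 k).2 (h2 k).2
    have : μ (k+1) ≤ max (μ (k+1)) (ν (k+1)) := le_max_left _ _
    omega

theorem bEEρ_hs_ν : HS (bEEρ l μ ν) ν := by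
  have : bEEρ l μ ν = bEEρ l ν μ := by
    funext k; show min _ _ - (_ - max _ _) = min _ _ - (_ - max _ _)
    rw [min_comm, max_comm]
  rw [this]
  exact bEEρ_hs_μ hl hν hμ h2 h1

theorem fEE_bEE : fEE (bEEa l μ ν) (bEEρ l μ ν) μ ν = l := by
  funext k
  cases k with
  | zero =>
    show max (μ 0) (ν 0) + (l 0 - max (μ 0) (ν 0)) = l 0
    have : max (μ 0) (ν 0) ≤ l 0 := max_le (h1 0).1 (h2 0).1
    omega
  | succ k =>
    show max (μ (k+1)) (ν (k+1)) + (min (μ k) (ν k) - bEEρ l μ ν k) = l (k+1)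
    have f1 := bEEρ_facts hl hμ hν h1 h2 k
    have e1 : max (μ (k+1)) (ν (k+1)) ≤ l (k+1) := max_le (h1 (k+1)).1 (h2 (k+1)).1
    have e2 : l (k+1) ≤ min (μ k) (ν k) := le_min (h1 k).2 (h2 k).2
    have e3 := bEEρ_le_min hl hμ hν h1 h2 k
    omega

end EEbwd

/-! ### The mixed local rule (0/1 entries) -/

def cEO (ε : ℕ) (ρ μ ν : ℕ → ℕ) : ℕ → ℕ
  | 0 => ε
  | (k+1) => if μ k ≤ ν k then μ k - ρ k else cEO ε ρ μ ν k

def fEO (ε : ℕ) (ρ μ ν : ℕ → ℕ) (k : ℕ) : ℕ :=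
  if μ k ≤ ν k then ν k + cEO ε ρ μ ν k else μ k

noncomputable def bcEO (l μ ν : ℕ → ℕ) (k : ℕ) : ℕ :=
  letI : Decidable (∃ j, μ (k+j) ≤ ν (k+j)) := Classical.dec _
  if h : ∃ j, μ (k+j) ≤ ν (k+j) then l (k + Nat.find h) - ν (k + Nat.find h) else 0

noncomputable def bEOε (l μ ν : ℕ → ℕ) : ℕ := bcEO l μ ν 0

noncomputable def bEOρ (l μ ν : ℕ → ℕ) (k : ℕ) : ℕ :=
  if μ k ≤ ν k then μ k - bcEO l μ ν (k+1) else ν k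

theorem cEO_succ (ε : ℕ) (ρ μ ν : ℕ → ℕ) (k : ℕ) :
    cEO ε ρ μ ν (k+1) = if μ k ≤ ν k then μ k - ρ k else cEO ε ρ μ ν k := rfl

theorem fEO_def (ε : ℕ) (ρ μ ν : ℕ → ℕ) (k : ℕ) :
    fEO ε ρ μ ν k = if μ k ≤ ν k then ν k + cEO ε ρ μ ν k else μ k := rfl

section EOfwd
variable {ε : ℕ} {ρ μ ν : ℕ → ℕ}
variable (hρ : Anti ρ) (hμ : Anti μ) (hν : Anti ν) (h1 : VS ρ μ) (h2 : HS ρ ν) (hε : ε ≤ 1)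
include hρ hμ hν h1 h2 hε

theorem cEO_le_one : ∀ k, cEO ε ρ μ ν k ≤ 1 := by
  intro k
  induction k with
  | zero => exact hε
  | succ k ih =>
    show (if μ k ≤ ν k then μ k - ρ k else cEO ε ρ μ ν k) ≤ 1
    split
    · have := (h1 k).2; omega
    · exact ih

theorem rhoeq (k : ℕ) (h : ¬ μ k ≤ ν k) : ρ k = ν k := by
  have := (h1 k).2; have := (h2 k).1; omega

theorem fEO_anti : Anti (fEO ε ρ μ ν) := by
  intro k
  have hc := cEO_le_one hρ hμ hν h1 h2 hε k
  have hc1 := cEO_le_one hρ hμ hν h1 h2 hε (k+1)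
  rw [fEO_def, fEO_def, cEO_succ]
  by_cases hk : μ k ≤ ν k <;> by_cases hk1 : μ (k+1) ≤ ν (k+1) <;>
    simp only [hk, hk1, if_true, if_false]
  · have e1 := (h2 k).2
    have e2 := (h1 k).1
    omega
  · have := hμ k; omega
  · have e1 := (h2 k).2
    have e2 := (h2 k).1
    omega
  · exact hμ k

theorem fEO_hs_μ : HS μ (fEO ε ρ μ ν) := by
  intro k
  have hc1 := cEO_le_one hρ hμ hν h1 h2 hε (k+1)
  constructor
  · rw [fEO_def]
    split <;> omega
  · rw [fEO_def, cEO_succ]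
    by_cases hk1 : μ (k+1) ≤ ν (k+1) <;> by_cases hk : μ k ≤ ν k <;>
      simp only [hk, hk1, if_true, if_false]
    · have e1 := (h2 k).2
      have e2 := (h1 k).1
      omega
    · have e1 := (h2 k).2
      have e2 := (h2 k).1
      have hc := cEO_le_one hρ hμ hν h1 h2 hε k
      omega
    · exact hμ k
    · exact hμ k

theorem fEO_vs_ν : VS ν (fEO ε ρ μ ν) := by
  intro k
  have hc := cEO_le_one hρ hμ hν h1 h2 hε k
  constructor
  · show ν k ≤ if μ k ≤ ν k then ν k + cEO ε ρ μ ν k else μ k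
    split <;> omega
  · show (if μ k ≤ ν k then ν k + cEO ε ρ μ ν k else μ k) ≤ ν k + 1
    have e1 := (h1 k).2
    have e2 := (h2 k).1
    split <;> omega

theorem fEO_vn {t : ℕ} (hvμ : Vn μ t) (hvν : Vn ν t) : Vn (fEO ε ρ μ ν) (t+1) := by
  intro k hk
  obtain ⟨k, rfl⟩ : ∃ k', k = k' + 1 := ⟨k - 1, by omega⟩
  have := (fEO_hs_μ hρ hμ hν h1 h2 hε k).2
  have h0 : μ k = 0 := hvμ k (by omega)
  omega

theorem fEO_key (k : ℕ) :
    fEO ε ρ μ ν k + ρ k + cEO ε ρ μ ν (k+1) = μ k + ν k + cEO ε ρ μ ν k := by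
  rw [fEO_def, cEO_succ]
  by_cases hk : μ k ≤ ν k <;> simp only [hk, if_true, if_false]
  · have := (h1 k).1; omega
  · have := rhoeq hρ hμ hν h1 h2 hε k hk; omega

theorem fEO_sz {t : ℕ} (hvμ : Vn μ t) (hvν : Vn ν t) (hvρ : Vn ρ t) {R : ℕ} (hR : t + 1 ≤ R) :
    sz R (fEO ε ρ μ ν) + sz R ρ = sz R μ + sz R ν + ε := by
  have hsum : ∀ k, fEO ε ρ μ ν k + ρ k + cEO ε ρ μ ν (k+1) = μ k + ν k + cEO ε ρ μ ν k :=
    fEO_key hρ hμ hν h1 h2 hε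
  have key : (sz R (fEO ε ρ μ ν) + sz R ρ) + (∑ k ∈ Finset.range R, cEO ε ρ μ ν (k+1))
      = (sz R μ + sz R ν) + ∑ k ∈ Finset.range R, cEO ε ρ μ ν k := by
    unfold sz
    rw [← Finset.sum_add_distrib, ← Finset.sum_add_distrib, ← Finset.sum_add_distrib,
      ← Finset.sum_add_distrib]
    exact Finset.sum_congr rfl (fun k _ => by have := hsum k; omega)
  have shift : (∑ k ∈ Finset.range R, cEO ε ρ μ ν (k+1)) + cEO ε ρ μ ν 0
      = ∑ k ∈ Finset.range (R+1), cEO ε ρ μ ν k :=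
    (Finset.sum_range_succ' (cEO ε ρ μ ν) R).symm
  have last : ∑ k ∈ Finset.range (R+1), cEO ε ρ μ ν k
      = (∑ k ∈ Finset.range R, cEO ε ρ μ ν k) + cEO ε ρ μ ν R := Finset.sum_range_succ _ _
  have hcR : cEO ε ρ μ ν R = 0 := by
    obtain ⟨k, rfl⟩ : ∃ k', R = k' + 1 := ⟨R - 1, by omega⟩
    rw [cEO_succ]
    have e1 : μ k = 0 := hvμ k (by omega)
    have e2 : ν k = 0 := hvν k (by omega)
    simp [e1, e2]
  have hc0 : cEO ε ρ μ ν 0 = ε := rfl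
  omega

theorem cEO_push (k : ℕ) : ∀ d, (∀ j, j < d → ¬ μ (k+j) ≤ ν (k+j)) →
    cEO ε ρ μ ν (k+d) = cEO ε ρ μ ν k := by
  intro d
  induction d with
  | zero => intro _; rfl
  | succ d ih =>
    intro h
    have e : k + (d+1) = k + d + 1 := by omega
    rw [e, cEO_succ, if_neg (h d (by omega))]
    exact ih (fun j hj => h j (by omega))

theorem bcEO_fEO {t : ℕ} (hvμ : Vn μ t) (hvν : Vn ν t) (k : ℕ) :
    bcEO (fEO ε ρ μ ν) μ ν k = cEO ε ρ μ ν k := by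
  have hex : ∃ j, μ (k+j) ≤ ν (k+j) := ⟨t, by rw [hvμ (k+t) (by omega)]; omega⟩
  unfold bcEO
  rw [dif_pos hex]
  set J := Nat.find hex with hJ
  have hspec : μ (k+J) ≤ ν (k+J) := Nat.find_spec hex
  have hmin : ∀ j, j < J → ¬ μ (k+j) ≤ ν (k+j) := fun j hj => Nat.find_min hex hj
  have hfl : fEO ε ρ μ ν (k+J) = ν (k+J) + cEO ε ρ μ ν (k+J) := by
    rw [fEO_def, if_pos hspec]
  rw [hfl, cEO_push hρ hμ hν h1 h2 hε k J hmin]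
  omega

theorem bEOε_fEO {t : ℕ} (hvμ : Vn μ t) (hvν : Vn ν t) :
    bEOε (fEO ε ρ μ ν) μ ν = ε :=
  bcEO_fEO hρ hμ hν h1 h2 hε hvμ hvν 0

theorem bEOρ_fEO {t : ℕ} (hvμ : Vn μ t) (hvν : Vn ν t) :
    bEOρ (fEO ε ρ μ ν) μ ν = ρ := by
  funext k
  unfold bEOρ
  rw [bcEO_fEO hρ hμ hν h1 h2 hε hvμ hvν (k+1), cEO_succ]
  by_cases hk : μ k ≤ ν k <;> simp only [hk, if_true, if_false]
  · have := (h1 k).1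
    omega
  · exact (rhoeq hρ hμ hν h1 h2 hε k hk).symm

end EOfwd

section EObwd
variable {l μ ν : ℕ → ℕ} {t : ℕ}
variable (hl : Anti l) (hμ : Anti μ) (hν : Anti ν) (h1 : HS μ l) (h2 : VS ν l)
variable (hvμ : Vn μ t) (hvν : Vn ν t)
include hl hμ hν h1 h2 hvμ hvν

theorem EOhex (k : ℕ) : ∃ j, μ (k+j) ≤ ν (k+j) :=
  ⟨t, by rw [hvμ (k+t) (by omega)]; omega⟩

theorem bcEO_of_le (k : ℕ) (hk : μ k ≤ ν k) : bcEO l μ ν k = l k - ν k := by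
  unfold bcEO
  have hex : ∃ j, μ (k+j) ≤ ν (k+j) := ⟨0, by simpa using hk⟩
  rw [dif_pos hex]
  have h0 : Nat.find hex = 0 := by
    rw [Nat.find_eq_zero]
    simpa using hk
  rw [h0]
  simp

theorem bcEO_of_gt (k : ℕ) (hk : ¬ μ k ≤ ν k) : bcEO l μ ν k = bcEO l μ ν (k+1) := by
  unfold bcEO
  have hex : ∃ j, μ (k+j) ≤ ν (k+j) := EOhex hl hμ hν h1 h2 hvμ hvν k
  have hex1 : ∃ j, μ (k+1+j) ≤ ν (k+1+j) := EOhex hl hμ hν h1 h2 hvμ hvν (k+1)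
  rw [dif_pos hex, dif_pos hex1]
  set J := Nat.find hex with hJ
  have hJpos : 0 < J := by
    rcases Nat.eq_zero_or_pos J with h|h
    · exfalso; have := Nat.find_spec hex; rw [← hJ, h] at this; simp at this; exact hk this
    · exact h
  have hfind : Nat.find hex1 = J - 1 := by
    rw [Nat.find_eq_iff]
    constructor
    · have : k + 1 + (J-1) = k + J := by omega
      rw [this]; exact Nat.find_spec hex
    · intro j hj
      have : k + 1 + j = k + (j+1) := by omega
      rw [this]
      exact Nat.find_min hex (by omega)
  rw [hfind]
  have : k + 1 + (J - 1) = k + J := by omega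
  rw [this]

theorem bcEO_le_one (k : ℕ) : bcEO l μ ν k ≤ 1 := by
  unfold bcEO
  have hex : ∃ j, μ (k+j) ≤ ν (k+j) := EOhex hl hμ hν h1 h2 hvμ hvν k
  rw [dif_pos hex]
  have := (h2 (k + Nat.find hex)).2
  omega

/-- If `bcEO (k+1) = 1` then `ν (k+1) + 1 ≤ μ k`. -/
theorem bc_succ_aux (k : ℕ) (hb : bcEO l μ ν (k+1) = 1) : ν (k+1) + 1 ≤ μ k := by
  by_cases hk1 : μ (k+1) ≤ ν (k+1)
  · have := bcEO_of_le hl hμ hν h1 h2 hvμ hvν (k+1) hk1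
    rw [this] at hb
    have e1 := (h1 (k+1)).1
    have e2 := (h1 k).2
    have e3 := (h2 (k+1)).1
    omega
  · have := hμ k
    omega

theorem nu_succ_le_mu (k : ℕ) : ν (k+1) ≤ μ k := by
  have e1 := (h2 (k+1)).1
  have e2 := (h1 k).2
  omega

theorem bEOρ_anti : Anti (bEOρ l μ ν) := by
  intro k
  have hb1 := bcEO_le_one hl hμ hν h1 h2 hvμ hvν (k+1)
  have hb2 := bcEO_le_one hl hμ hν h1 h2 hvμ hvν (k+2)
  unfold bEOρ
  by_cases hk : μ k ≤ ν k <;> by_cases hk1 : μ (k+1) ≤ ν (k+1) <;>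
    simp only [hk, hk1, if_true, if_false]
  · -- both ≤ : μ(k+1) - bc(k+2) ≤ μ k - bc(k+1)
    by_cases hb : bcEO l μ ν (k+1) = 1
    · have h3 := bc_succ_aux hl hμ hν h1 h2 hvμ hvν k hb
      have h4 : μ (k+1) ≤ ν (k+1) := hk1
      omega
    · have := hμ k; omega
  · -- μ(k+1) > ν(k+1): ρ(k+1) = ν(k+1) ≤ μ k - bc(k+1)
    by_cases hb : bcEO l μ ν (k+1) = 1
    · have h3 := bc_succ_aux hl hμ hν h1 h2 hvμ hvν k hb
      omega
    · have h3 := nu_succ_le_mu hl hμ hν h1 h2 hvμ hvν k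
      omega
  · -- μ k > ν k, μ(k+1) ≤ ν(k+1): μ(k+1) - bc(k+2) ≤ ν k
    have := hν k
    omega
  · exact hν k

theorem bEOρ_vs_μ : VS (bEOρ l μ ν) μ := by
  intro k
  have hb1 := bcEO_le_one hl hμ hν h1 h2 hvμ hvν (k+1)
  unfold bEOρ
  by_cases hk : μ k ≤ ν k <;> simp only [hk, if_true, if_false]
  · constructor
    · omega
    · by_cases hb : bcEO l μ ν (k+1) = 1
      · have h3 := bc_succ_aux hl hμ hν h1 h2 hvμ hvν k hb
        omega
      · omega
  · constructor
    · omega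
    · have e1 := (h1 k).1
      have e2 := (h2 k).2
      omega

theorem bEOρ_hs_ν : HS (bEOρ l μ ν) ν := by
  intro k
  have hb1 := bcEO_le_one hl hμ hν h1 h2 hvμ hvν (k+1)
  constructor
  · unfold bEOρ
    by_cases hk : μ k ≤ ν k <;> simp only [hk, if_true, if_false]
    · omega
    · omega
  · unfold bEOρ
    by_cases hk : μ k ≤ ν k <;> simp only [hk, if_true, if_false]
    · by_cases hb : bcEO l μ ν (k+1) = 1
      · have h3 := bc_succ_aux hl hμ hν h1 h2 hvμ hvν k hb
        omega
      · have h3 := nu_succ_le_mu hl hμ hν h1 h2 hvμ hvν k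
        omega
    · exact hν k

theorem bcEO_succ_le_mu (k : ℕ) (hk : μ k ≤ ν k) : bcEO l μ ν (k+1) ≤ μ k := by
  by_cases hb : bcEO l μ ν (k+1) = 1
  · have h3 := bc_succ_aux hl hμ hν h1 h2 hvμ hvν k hb
    omega
  · have hb1 := bcEO_le_one hl hμ hν h1 h2 hvμ hvν (k+1)
    omega

theorem cEO_bEO (k : ℕ) :
    cEO (bEOε l μ ν) (bEOρ l μ ν) μ ν k = bcEO l μ ν k := by
  induction k with
  | zero => rfl
  | succ k ih =>
    rw [cEO_succ]
    by_cases hk : μ k ≤ ν k <;> simp only [hk, if_true, if_false]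
    · unfold bEOρ
      simp only [hk, if_true]
      have := bcEO_succ_le_mu hl hμ hν h1 h2 hvμ hvν k hk
      omega
    · rw [ih, bcEO_of_gt hl hμ hν h1 h2 hvμ hvν k hk]

theorem fEO_bEO : fEO (bEOε l μ ν) (bEOρ l μ ν) μ ν = l := by
  funext k
  rw [fEO_def]
  by_cases hk : μ k ≤ ν k <;> simp only [hk, if_true, if_false]
  · rw [cEO_bEO hl hμ hν h1 h2 hvμ hvν k, bcEO_of_le hl hμ hν h1 h2 hvμ hvν k hk]
    have := (h2 k).1
    omega
  · have e1 := (h1 k).1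
    have e2 := (h2 k).1
    have e3 := (h2 k).2
    omega

theorem bEOε_le_one : bEOε l μ ν ≤ 1 := bcEO_le_one hl hμ hν h1 h2 hvμ hvν 0

end EObwd


/-! ### Conjugation of partitions -/

noncomputable def conj (f : ℕ → ℕ) (k : ℕ) : ℕ :=
  letI : Decidable (∃ i, f i ≤ k) := Classical.dec _
  if h : ∃ i, f i ≤ k then Nat.find h else 0

section Conj
variable {f : ℕ → ℕ} {t : ℕ}
variable (hf : Anti f) (hv : Vn f t)
include hf hv

theorem conj_ex (k : ℕ) : ∃ i, f i ≤ k := ⟨t, by rw [hv t le_rfl]; omega⟩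

theorem lt_conj_iff {i k : ℕ} : i < conj f k ↔ k < f i := by
  have hex : ∃ i, f i ≤ k := conj_ex hf hv k
  unfold conj
  rw [dif_pos hex]
  constructor
  · intro h
    by_contra hc
    push_neg at hc
    have h2 : Nat.find hex ≤ i := Nat.find_le hc
    omega
  · intro h
    by_contra hc
    push_neg at hc
    have := hf.le (show Nat.find hex ≤ i from hc)
    have := Nat.find_spec hex
    omega

theorem conj_le_iff {i k : ℕ} : conj f k ≤ i ↔ f i ≤ k := by
  rw [← Nat.not_lt, lt_conj_iff hf hv, Nat.not_lt]

theorem conj_anti : Anti (conj f) := by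
  intro k
  rw [conj_le_iff hf hv]
  have : f (conj f k) ≤ k := (conj_le_iff hf hv).mp le_rfl
  omega

theorem conj_vn : Vn (conj f) (f 0) := by
  intro k hk
  have : conj f k ≤ 0 := by
    rw [conj_le_iff hf hv]; omega
  omega

theorem conj_zero_le : conj f 0 ≤ t := by
  rw [conj_le_iff hf hv, hv t le_rfl]

theorem conj_conj : conj (conj f) = f := by
  funext i
  have hf' : Anti (conj f) := conj_anti hf hv
  have hv' : Vn (conj f) (f 0) := conj_vn hf hv
  have key : ∀ j, conj (conj f) i ≤ j ↔ f i ≤ j := by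
    intro j
    rw [conj_le_iff hf' hv', conj_le_iff hf hv]
  have h1 := (key (f i)).mpr le_rfl
  have h2 := (key (conj (conj f) i)).mp le_rfl
  omega

end Conj

theorem hs_iff_vs_conj {a b : ℕ → ℕ} {t : ℕ} (ha : Anti a) (hva : Vn a t)
    (hb : Anti b) (hvb : Vn b t) : HS a b ↔ VS (conj a) (conj b) := by
  constructor
  · intro h
    intro k
    constructor
    · rw [conj_le_iff ha hva]
      have h1 : b (conj b k) ≤ k := (conj_le_iff hb hvb).mp le_rfl
      exact le_trans (h (conj b k)).1 h1
    · rw [conj_le_iff hb hvb]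
      have h1 : a (conj a k) ≤ k := (conj_le_iff ha hva).mp le_rfl
      exact le_trans (h (conj a k)).2 h1
  · intro h
    intro i
    constructor
    · by_contra hc
      push_neg at hc
      have h1 : i < conj a (b i) := (lt_conj_iff ha hva).mpr hc
      have h2 : conj b (b i) ≤ i := (conj_le_iff hb hvb).mpr le_rfl
      have := (h (b i)).1
      omega
    · by_contra hc
      push_neg at hc
      have h1 : i + 1 < conj b (a i) := (lt_conj_iff hb hvb).mpr hc
      have h2 : conj a (a i) ≤ i := (conj_le_iff ha hva).mpr le_rfl
      have := (h (a i)).2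
      omega

theorem vs_iff_hs_conj {a b : ℕ → ℕ} {t : ℕ} (ha : Anti a) (hva : Vn a t)
    (hb : Anti b) (hvb : Vn b t) : VS a b ↔ HS (conj a) (conj b) := by
  have ha' : Anti (conj a) := conj_anti ha hva
  have hva' : Vn (conj a) (a 0) := conj_vn ha hva
  have hb' : Anti (conj b) := conj_anti hb hvb
  have hvb' : Vn (conj b) (b 0) := conj_vn hb hvb
  have hva'' : Vn (conj a) (a 0 + b 0) := hva'.mono (by omega)
  have hvb'' : Vn (conj b) (a 0 + b 0) := hvb'.mono (by omega)
  rw [hs_iff_vs_conj ha' hva'' hb' hvb'', conj_conj ha hva, conj_conj hb hvb]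

theorem conj_eq_card {f : ℕ → ℕ} {t : ℕ} (hf : Anti f) (hv : Vn f t) {R : ℕ} (hR : t ≤ R)
    (k : ℕ) : conj f k = ((Finset.range R).filter (fun i => k < f i)).card := by
  have : (Finset.range R).filter (fun i => k < f i) = Finset.range (conj f k) := by
    ext i
    simp only [Finset.mem_filter, Finset.mem_range]
    rw [← lt_conj_iff hf hv]
    have hx1 : conj f k ≤ conj f 0 := (conj_anti hf hv).le (Nat.zero_le k)
    have hx2 : conj f 0 ≤ t := conj_zero_le hf hv
    have : conj f k ≤ R := by omega
    constructor
    · tauto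
    · intro h; exact ⟨by omega, h⟩
  rw [this, Finset.card_range]

theorem sz_conj {f : ℕ → ℕ} {t : ℕ} (hf : Anti f) (hv : Vn f t) {R : ℕ} (hR : t ≤ R)
    (h0 : f 0 ≤ R) : sz R (conj f) = sz R f := by
  unfold sz
  have e1 : ∀ k, conj f k = ((Finset.range R).filter (fun i => k < f i)).card :=
    conj_eq_card hf hv hR
  calc ∑ k ∈ Finset.range R, conj f k
      = ∑ k ∈ Finset.range R, ∑ i ∈ Finset.range R, (if k < f i then 1 else 0) := by
        refine Finset.sum_congr rfl (fun k _ => ?_)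
        rw [e1 k, Finset.card_filter]
    _ = ∑ i ∈ Finset.range R, ∑ k ∈ Finset.range R, (if k < f i then 1 else 0) :=
        Finset.sum_comm
    _ = ∑ i ∈ Finset.range R, f i := by
        refine Finset.sum_congr rfl (fun i _ => ?_)
        rw [← Finset.card_filter]
        have : (Finset.range R).filter (fun k => k < f i) = Finset.range (f i) := by
          ext k
          simp only [Finset.mem_filter, Finset.mem_range]
          have : f i ≤ R := le_trans (hf.le (Nat.zero_le i)) h0
          constructor
          · tauto
          · intro h; exact ⟨by omega, h⟩
        rw [this, Finset.card_range]

/-! ### The odd-odd local rule, by conjugation -/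

noncomputable def fOO (a : ℕ) (ρ μ ν : ℕ → ℕ) : ℕ → ℕ :=
  conj (fEE a (conj ρ) (conj μ) (conj ν))

noncomputable def bOOa (l μ ν : ℕ → ℕ) : ℕ := bEEa (conj l) (conj μ) (conj ν)

noncomputable def bOOρ (l μ ν : ℕ → ℕ) : ℕ → ℕ :=
  conj (bEEρ (conj l) (conj μ) (conj ν))

theorem fOO_symm (a : ℕ) (ρ μ ν : ℕ → ℕ) : fOO a ρ μ ν = fOO a ρ ν μ := by
  unfold fOO; rw [fEE_symm]

section OOfwd
variable {a : ℕ} {ρ μ ν : ℕ → ℕ} {t : ℕ}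
variable (hρ : Anti ρ) (hμ : Anti μ) (hν : Anti ν) (h1 : VS ρ μ) (h2 : VS ρ ν)
variable (hvρ : Vn ρ t) (hvμ : Vn μ t) (hvν : Vn ν t) (h0μ : μ 0 ≤ t) (h0ν : ν 0 ≤ t)
include hρ hμ hν h1 h2 hvρ hvμ hvν h0μ h0ν

theorem OO_cs : Anti (conj ρ) ∧ Anti (conj μ) ∧ Anti (conj ν) ∧
    HS (conj ρ) (conj μ) ∧ HS (conj ρ) (conj ν) ∧
    Vn (conj ρ) t ∧ Vn (conj μ) t ∧ Vn (conj ν) t := by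
  have h0ρ : ρ 0 ≤ t := le_trans (h1 0).1 h0μ
  refine ⟨conj_anti hρ hvρ, conj_anti hμ hvμ, conj_anti hν hvν,
    (vs_iff_hs_conj hρ hvρ hμ hvμ).mp h1, (vs_iff_hs_conj hρ hvρ hν hvν).mp h2,
    (conj_vn hρ hvρ).mono h0ρ, (conj_vn hμ hvμ).mono h0μ, (conj_vn hν hvν).mono h0ν⟩

theorem fOO_g_props : Anti (fEE a (conj ρ) (conj μ) (conj ν)) ∧
    Vn (fEE a (conj ρ) (conj μ) (conj ν)) (t+1) ∧
    fEE a (conj ρ) (conj μ) (conj ν) 0 ≤ t + a := by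
  obtain ⟨c1, c2, c3, c4, c5, c6, c7, c8⟩ := OO_cs hρ hμ hν h1 h2 hvρ hvμ hvν h0μ h0ν
  refine ⟨fEE_anti c1 c2 c3 c4 c5, fEE_vn c1 c2 c3 c4 c5 c7 c8, ?_⟩
  show max (conj μ 0) (conj ν 0) + a ≤ t + a
  have e1 := conj_zero_le hμ hvμ
  have e2 := conj_zero_le hν hvν
  omega

theorem fOO_anti : Anti (fOO a ρ μ ν) := by
  obtain ⟨g1, g2, g3⟩ := fOO_g_props hρ hμ hν h1 h2 hvρ hvμ hvν h0μ h0ν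
  exact conj_anti g1 g2

theorem fOO_vn : Vn (fOO a ρ μ ν) (t + a + 1) := by
  obtain ⟨g1, g2, g3⟩ := fOO_g_props hρ hμ hν h1 h2 hvρ hvμ hvν h0μ h0ν
  exact (conj_vn g1 g2).mono (by omega)

theorem fOO_zero_le : fOO a ρ μ ν 0 ≤ t + a + 1 := by
  obtain ⟨g1, g2, g3⟩ := fOO_g_props hρ hμ hν h1 h2 hvρ hvμ hvν h0μ h0ν
  have h2 : conj (fEE a (conj ρ) (conj μ) (conj ν)) 0 ≤ t + 1 := conj_zero_le g1 g2
  show conj (fEE a (conj ρ) (conj μ) (conj ν)) 0 ≤ t + a + 1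
  omega

theorem fOO_vs_μ : VS μ (fOO a ρ μ ν) := by
  obtain ⟨c1, c2, c3, c4, c5, c6, c7, c8⟩ := OO_cs hρ hμ hν h1 h2 hvρ hvμ hvν h0μ h0ν
  obtain ⟨g1, g2, g3⟩ := fOO_g_props hρ hμ hν h1 h2 hvρ hvμ hvν h0μ h0ν
  have key : HS (conj μ) (fEE a (conj ρ) (conj μ) (conj ν)) := fEE_hs_μ c1 c2 c3 c4 c5
  have hμ2 : Vn (conj μ) (t + a + 1) := c7.mono (by omega)
  have hg2 : Vn (fEE a (conj ρ) (conj μ) (conj ν)) (t + a + 1) := g2.mono (by omega)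
  have := (hs_iff_vs_conj c2 hμ2 g1 hg2).mp key
  rwa [conj_conj hμ hvμ] at this

theorem fOO_vs_ν : VS ν (fOO a ρ μ ν) := by
  rw [fOO_symm]
  exact fOO_vs_μ hρ hν hμ h2 h1 hvρ hvν hvμ h0ν h0μ

theorem fOO_sz {R : ℕ} (hR : t + a + 1 ≤ R) :
    sz R (fOO a ρ μ ν) + sz R ρ = sz R μ + sz R ν + a := by
  obtain ⟨c1, c2, c3, c4, c5, c6, c7, c8⟩ := OO_cs hρ hμ hν h1 h2 hvρ hvμ hvν h0μ h0ν
  obtain ⟨g1, g2, g3⟩ := fOO_g_props hρ hμ hν h1 h2 hvρ hvμ hvν h0μ h0ν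
  have h0ρ : ρ 0 ≤ t := le_trans (h1 0).1 h0μ
  have e0 : sz R (fOO a ρ μ ν) = sz R (fEE a (conj ρ) (conj μ) (conj ν)) :=
    sz_conj g1 g2 (by omega) (by omega)
  have e1 : sz R (fEE a (conj ρ) (conj μ) (conj ν)) + sz R (conj ρ)
      = sz R (conj μ) + sz R (conj ν) + a := fEE_sz c1 c2 c3 c4 c5 c7 c8 c6 (by omega)
  have e2 : sz R (conj ρ) = sz R ρ := sz_conj hρ hvρ (by omega) (by omega)
  have e3 : sz R (conj μ) = sz R μ := sz_conj hμ hvμ (by omega) (by omega)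
  have e4 : sz R (conj ν) = sz R ν := sz_conj hν hvν (by omega) (by omega)
  omega

theorem bOOa_fOO : bOOa (fOO a ρ μ ν) μ ν = a := by
  obtain ⟨c1, c2, c3, c4, c5, c6, c7, c8⟩ := OO_cs hρ hμ hν h1 h2 hvρ hvμ hvν h0μ h0ν
  obtain ⟨g1, g2, g3⟩ := fOO_g_props hρ hμ hν h1 h2 hvρ hvμ hvν h0μ h0ν
  unfold bOOa fOO
  rw [conj_conj g1 g2]
  exact bEEa_fEE c1 c2 c3 c4 c5

theorem bOOρ_fOO : bOOρ (fOO a ρ μ ν) μ ν = ρ := by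
  obtain ⟨c1, c2, c3, c4, c5, c6, c7, c8⟩ := OO_cs hρ hμ hν h1 h2 hvρ hvμ hvν h0μ h0ν
  obtain ⟨g1, g2, g3⟩ := fOO_g_props hρ hμ hν h1 h2 hvρ hvμ hvν h0μ h0ν
  unfold bOOρ fOO
  rw [conj_conj g1 g2, bEEρ_fEE c1 c2 c3 c4 c5]
  exact conj_conj hρ hvρ

end OOfwd

section OObwd
variable {l μ ν : ℕ → ℕ} {t : ℕ}
variable (hl : Anti l) (hμ : Anti μ) (hν : Anti ν) (h1 : VS μ l) (h2 : VS ν l)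
variable (hvl : Vn l t) (hvμ : Vn μ t) (hvν : Vn ν t) (h0l : l 0 ≤ t)
include hl hμ hν h1 h2 hvl hvμ hvν h0l

theorem OOb_cs : Anti (conj l) ∧ Anti (conj μ) ∧ Anti (conj ν) ∧
    HS (conj μ) (conj l) ∧ HS (conj ν) (conj l) ∧
    Vn (conj l) t ∧ Vn (conj μ) t ∧ Vn (conj ν) t := by
  have h0μ : μ 0 ≤ t := le_trans (h1 0).1 h0l
  have h0ν : ν 0 ≤ t := le_trans (h2 0).1 h0l
  refine ⟨conj_anti hl hvl, conj_anti hμ hvμ, conj_anti hν hvν,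
    (vs_iff_hs_conj hμ hvμ hl hvl).mp h1, (vs_iff_hs_conj hν hvν hl hvl).mp h2,
    (conj_vn hl hvl).mono h0l, (conj_vn hμ hvμ).mono h0μ, (conj_vn hν hvν).mono h0ν⟩

theorem bOOρ_props : Anti (bOOρ l μ ν) ∧ VS (bOOρ l μ ν) μ ∧ VS (bOOρ l μ ν) ν := by
  obtain ⟨c1, c2, c3, c4, c5, c6, c7, c8⟩ := OOb_cs hl hμ hν h1 h2 hvl hvμ hvν h0l
  have hr : Anti (bEEρ (conj l) (conj μ) (conj ν)) := bEEρ_anti c1 c2 c3 c4 c5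
  have hr1 : HS (bEEρ (conj l) (conj μ) (conj ν)) (conj μ) := bEEρ_hs_μ c1 c2 c3 c4 c5
  have hr2 : HS (bEEρ (conj l) (conj μ) (conj ν)) (conj ν) := bEEρ_hs_ν c1 c2 c3 c4 c5
  have hvr : Vn (bEEρ (conj l) (conj μ) (conj ν)) t := c7.of_le hr1.le
  constructor
  · exact conj_anti hr hvr
  constructor
  · have := (hs_iff_vs_conj hr hvr c2 c7).mp hr1
    rwa [conj_conj hμ hvμ] at this
  · have := (hs_iff_vs_conj hr hvr c3 c8).mp hr2
    rwa [conj_conj hν hvν] at this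

theorem fOO_bOO : fOO (bOOa l μ ν) (bOOρ l μ ν) μ ν = l := by
  obtain ⟨c1, c2, c3, c4, c5, c6, c7, c8⟩ := OOb_cs hl hμ hν h1 h2 hvl hvμ hvν h0l
  have hr : Anti (bEEρ (conj l) (conj μ) (conj ν)) := bEEρ_anti c1 c2 c3 c4 c5
  have hr1 : HS (bEEρ (conj l) (conj μ) (conj ν)) (conj μ) := bEEρ_hs_μ c1 c2 c3 c4 c5
  have hvr : Vn (bEEρ (conj l) (conj μ) (conj ν)) t := c7.of_le hr1.le
  unfold fOO bOOρ
  rw [conj_conj hr hvr]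
  unfold bOOa
  rw [fEE_bEE c1 c2 c3 c4 c5]
  exact conj_conj hl hvl

end OObwd


/-! ### Typed strips and the cell dispatch -/

def Stp (m e : ℕ) : (ℕ → ℕ) → (ℕ → ℕ) → Prop := if e < m then HS else VS

theorem Stp_hs {m e : ℕ} (h : e < m) : Stp m e = HS := if_pos h
theorem Stp_vs {m e : ℕ} (h : ¬ e < m) : Stp m e = VS := if_neg h

theorem Stp.le {m e : ℕ} {a b : ℕ → ℕ} (h : Stp m e a b) : ∀ k, a k ≤ b k := by
  unfold Stp at h
  split at h
  · exact fun k => (h k).1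
  · exact fun k => (h k).1

theorem Stp_zero (m e : ℕ) : Stp m e (fun _ => 0) (fun _ => 0) := by
  unfold Stp
  split
  · exact fun k => ⟨le_rfl, le_rfl⟩
  · exact fun k => ⟨le_rfl, by omega⟩

theorem anti_zero : Anti (fun _ => 0) := fun _ => le_rfl
theorem vn_zero (t : ℕ) : Vn (fun _ => 0) t := fun _ _ => rfl

noncomputable def cellF (m i j a : ℕ) (ρ tp lf : ℕ → ℕ) : ℕ → ℕ :=
  if i < m then (if j < m then fEE a ρ tp lf else fEO a ρ tp lf)
  else (if j < m then fEO a ρ lf tp else fOO a ρ tp lf)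

noncomputable def cellBa (m i j : ℕ) (l tp lf : ℕ → ℕ) : ℕ :=
  if i < m then (if j < m then bEEa l tp lf else bEOε l tp lf)
  else (if j < m then bEOε l lf tp else bOOa l tp lf)

noncomputable def cellBρ (m i j : ℕ) (l tp lf : ℕ → ℕ) : ℕ → ℕ :=
  if i < m then (if j < m then bEEρ l tp lf else bEOρ l tp lf)
  else (if j < m then bEOρ l lf tp else bOOρ l tp lf)

theorem cellF_swap (m i j a : ℕ) (ρ tp lf : ℕ → ℕ) :
    cellF m i j a ρ tp lf = cellF m j i a ρ lf tp := by
  unfold cellF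
  by_cases hi : i < m <;> by_cases hj : j < m <;> simp only [hi, hj, if_true, if_false]
  · exact fEE_symm a ρ tp lf
  · exact fOO_symm a ρ tp lf

/-- Master forward cell lemma. -/
theorem cellF_spec {m : ℕ} (i j a t : ℕ) {ρ tp lf : ℕ → ℕ}
    (hρ : Anti ρ) (htp : Anti tp) (hlf : Anti lf)
    (h1 : Stp m j ρ tp) (h2 : Stp m i ρ lf)
    (hvρ : Vn ρ t) (hvtp : Vn tp t) (hvlf : Vn lf t)
    (h0tp : tp 0 ≤ t) (h0lf : lf 0 ≤ t)
    (ha : ((i < m ∧ ¬ j < m) ∨ (¬ i < m ∧ j < m)) → a ≤ 1) :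
    Anti (cellF m i j a ρ tp lf) ∧
    Stp m i tp (cellF m i j a ρ tp lf) ∧
    Stp m j lf (cellF m i j a ρ tp lf) ∧
    Vn (cellF m i j a ρ tp lf) (t + a + 1) ∧
    cellF m i j a ρ tp lf 0 ≤ t + a + 1 ∧
    (∀ R, t + a + 1 ≤ R → sz R (cellF m i j a ρ tp lf) + sz R ρ = sz R tp + sz R lf + a) ∧
    cellBa m i j (cellF m i j a ρ tp lf) tp lf = a ∧
    cellBρ m i j (cellF m i j a ρ tp lf) tp lf = ρ := by
  unfold cellF cellBa cellBρ
  by_cases hi : i < m <;> by_cases hj : j < m <;> simp only [hi, hj, if_true, if_false]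
  · -- EE
    rw [Stp_hs hj] at h1
    rw [Stp_hs hi] at h2
    rw [Stp_hs hi, Stp_hs hj]
    refine ⟨fEE_anti hρ htp hlf h1 h2, fEE_hs_μ hρ htp hlf h1 h2, fEE_hs_ν hρ htp hlf h1 h2,
      (fEE_vn hρ htp hlf h1 h2 hvtp hvlf).mono (by omega), ?_,
      fun R hR => fEE_sz hρ htp hlf h1 h2 hvtp hvlf hvρ (by omega),
      bEEa_fEE hρ htp hlf h1 h2, bEEρ_fEE hρ htp hlf h1 h2⟩
    show max (tp 0) (lf 0) + a ≤ t + a + 1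
    omega
  · -- EO
    rw [Stp_vs hj] at h1
    rw [Stp_hs hi] at h2
    rw [Stp_hs hi, Stp_vs hj]
    have hε : a ≤ 1 := ha (Or.inl ⟨hi, hj⟩)
    refine ⟨fEO_anti hρ htp hlf h1 h2 hε, fEO_hs_μ hρ htp hlf h1 h2 hε,
      fEO_vs_ν hρ htp hlf h1 h2 hε,
      (fEO_vn hρ htp hlf h1 h2 hε hvtp hvlf).mono (by omega), ?_,
      fun R hR => fEO_sz hρ htp hlf h1 h2 hε hvtp hvlf hvρ (by omega),
      bEOε_fEO hρ htp hlf h1 h2 hε hvtp hvlf, bEOρ_fEO hρ htp hlf h1 h2 hε hvtp hvlf⟩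
    have := (fEO_vs_ν hρ htp hlf h1 h2 hε 0).2
    omega
  · -- OE
    rw [Stp_hs hj] at h1
    rw [Stp_vs hi] at h2
    rw [Stp_vs hi, Stp_hs hj]
    have hε : a ≤ 1 := ha (Or.inr ⟨hi, hj⟩)
    refine ⟨fEO_anti hρ hlf htp h2 h1 hε, fEO_vs_ν hρ hlf htp h2 h1 hε,
      fEO_hs_μ hρ hlf htp h2 h1 hε,
      (fEO_vn hρ hlf htp h2 h1 hε hvlf hvtp).mono (by omega), ?_, ?_,
      bEOε_fEO hρ hlf htp h2 h1 hε hvlf hvtp, bEOρ_fEO hρ hlf htp h2 h1 hε hvlf hvtp⟩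
    · have := (fEO_vs_ν hρ hlf htp h2 h1 hε 0).2
      omega
    · intro R hR
      have := fEO_sz hρ hlf htp h2 h1 hε hvlf hvtp hvρ (show t + 1 ≤ R by omega)
      omega
  · -- OO
    rw [Stp_vs hj] at h1
    rw [Stp_vs hi] at h2
    rw [Stp_vs hi, Stp_vs hj]
    exact ⟨fOO_anti hρ htp hlf h1 h2 hvρ hvtp hvlf h0tp h0lf,
      fOO_vs_μ hρ htp hlf h1 h2 hvρ hvtp hvlf h0tp h0lf,
      fOO_vs_ν hρ htp hlf h1 h2 hvρ hvtp hvlf h0tp h0lf,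
      fOO_vn hρ htp hlf h1 h2 hvρ hvtp hvlf h0tp h0lf,
      fOO_zero_le hρ htp hlf h1 h2 hvρ hvtp hvlf h0tp h0lf,
      fun R hR => fOO_sz hρ htp hlf h1 h2 hvρ hvtp hvlf h0tp h0lf hR,
      bOOa_fOO hρ htp hlf h1 h2 hvρ hvtp hvlf h0tp h0lf,
      bOOρ_fOO hρ htp hlf h1 h2 hvρ hvtp hvlf h0tp h0lf⟩

/-- Master backward cell lemma. -/
theorem cellB_spec {m : ℕ} (i j t : ℕ) {l tp lf : ℕ → ℕ}
    (hl : Anti l) (htp : Anti tp) (hlf : Anti lf)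
    (h1 : Stp m i tp l) (h2 : Stp m j lf l)
    (hvl : Vn l t) (hvtp : Vn tp t) (hvlf : Vn lf t) (h0l : l 0 ≤ t) :
    Anti (cellBρ m i j l tp lf) ∧
    Stp m j (cellBρ m i j l tp lf) tp ∧
    Stp m i (cellBρ m i j l tp lf) lf ∧
    (((i < m ∧ ¬ j < m) ∨ (¬ i < m ∧ j < m)) → cellBa m i j l tp lf ≤ 1) ∧
    cellF m i j (cellBa m i j l tp lf) (cellBρ m i j l tp lf) tp lf = l := by
  unfold cellF cellBa cellBρ
  by_cases hi : i < m <;> by_cases hj : j < m <;> simp only [hi, hj, if_true, if_false]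
  · -- EE
    rw [Stp_hs hi] at h1
    rw [Stp_hs hj] at h2
    rw [Stp_hs hi, Stp_hs hj]
    exact ⟨bEEρ_anti hl htp hlf h1 h2, bEEρ_hs_μ hl htp hlf h1 h2,
      bEEρ_hs_ν hl htp hlf h1 h2,
      fun hcon => by simp at hcon,
      fEE_bEE hl htp hlf h1 h2⟩
  · -- EO
    rw [Stp_hs hi] at h1
    rw [Stp_vs hj] at h2
    rw [Stp_hs hi, Stp_vs hj]
    exact ⟨bEOρ_anti hl htp hlf h1 h2 hvtp hvlf, bEOρ_vs_μ hl htp hlf h1 h2 hvtp hvlf,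
      bEOρ_hs_ν hl htp hlf h1 h2 hvtp hvlf,
      fun _ => bEOε_le_one hl htp hlf h1 h2 hvtp hvlf,
      fEO_bEO hl htp hlf h1 h2 hvtp hvlf⟩
  · -- OE
    rw [Stp_vs hi] at h1
    rw [Stp_hs hj] at h2
    rw [Stp_vs hi, Stp_hs hj]
    exact ⟨bEOρ_anti hl hlf htp h2 h1 hvlf hvtp, bEOρ_hs_ν hl hlf htp h2 h1 hvlf hvtp,
      bEOρ_vs_μ hl hlf htp h2 h1 hvlf hvtp,
      fun _ => bEOε_le_one hl hlf htp h2 h1 hvlf hvtp,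
      fEO_bEO hl hlf htp h2 h1 hvlf hvtp⟩
  · -- OO
    rw [Stp_vs hi] at h1
    rw [Stp_vs hj] at h2
    rw [Stp_vs hi, Stp_vs hj]
    obtain ⟨p1, p2, p3⟩ := bOOρ_props hl htp hlf h1 h2 hvl hvtp hvlf h0l
    exact ⟨p1, p2, p3,
      fun hcon => by simp at hcon,
      fOO_bOO hl htp hlf h1 h2 hvl hvtp hvlf h0l⟩


/-! ### The growth diagram -/

noncomputable def growRow (m i : ℕ) (gi : ℕ → ℕ → ℕ) (Ai : ℕ → ℕ) : ℕ → (ℕ → ℕ)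
  | 0 => fun _ => 0
  | (j+1) => cellF m i j (Ai j) (gi j) (gi (j+1)) (growRow m i gi Ai j)

noncomputable def grow (m : ℕ) (A : ℕ → ℕ → ℕ) : ℕ → ℕ → (ℕ → ℕ)
  | 0 => fun _ _ => 0
  | (i+1) => growRow m i (grow m A i) (A i)

theorem grow_zero (m : ℕ) (A : ℕ → ℕ → ℕ) (j : ℕ) : grow m A 0 j = fun _ => 0 := rfl

theorem grow_col0 (m : ℕ) (A : ℕ → ℕ → ℕ) (i : ℕ) : grow m A i 0 = fun _ => 0 := by
  cases i <;> rfl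

theorem grow_succ (m : ℕ) (A : ℕ → ℕ → ℕ) (i j : ℕ) :
    grow m A (i+1) (j+1) = cellF m i j (A i j) (grow m A i j) (grow m A i (j+1))
      (grow m A (i+1) j) := rfl

/-- partial sums of the matrix over the rectangle `[0,i) × [0,j)` -/
def rsum (A : ℕ → ℕ → ℕ) (i j : ℕ) : ℕ :=
  ∑ x ∈ Finset.range i, ∑ y ∈ Finset.range j, A x y

theorem rsum_zero_left (A : ℕ → ℕ → ℕ) (j : ℕ) : rsum A 0 j = 0 := rfl

theorem rsum_zero_right (A : ℕ → ℕ → ℕ) (i : ℕ) : rsum A i 0 = 0 := by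
  unfold rsum; simp

theorem rsum_mono (A : ℕ → ℕ → ℕ) {i j i' j' : ℕ} (hi : i ≤ i') (hj : j ≤ j') :
    rsum A i j ≤ rsum A i' j' := by
  unfold rsum
  calc ∑ x ∈ Finset.range i, ∑ y ∈ Finset.range j, A x y
      ≤ ∑ x ∈ Finset.range i, ∑ y ∈ Finset.range j', A x y := by
        refine Finset.sum_le_sum (fun x _ => ?_)
        exact Finset.sum_le_sum_of_subset (by simpa using Finset.range_subset_range.mpr hj)
    _ ≤ ∑ x ∈ Finset.range i', ∑ y ∈ Finset.range j', A x y :=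
        Finset.sum_le_sum_of_subset (by simpa using Finset.range_subset_range.mpr hi)

theorem rsum_add_tp (A : ℕ → ℕ → ℕ) (i j : ℕ) :
    rsum A i (j+1) + A i j ≤ rsum A (i+1) (j+1) := by
  unfold rsum
  rw [Finset.sum_range_succ]
  have : A i j ≤ ∑ y ∈ Finset.range (j+1), A i y :=
    Finset.single_le_sum (f := fun y => A i y) (fun _ _ => Nat.zero_le _)
      (Finset.mem_range.mpr (by omega))
  omega

theorem rsum_add_lf (A : ℕ → ℕ → ℕ) (i j : ℕ) :
    rsum A (i+1) j + A i j ≤ rsum A (i+1) (j+1) := by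
  unfold rsum
  have e : ∀ x, ∑ y ∈ Finset.range (j+1), A x y = (∑ y ∈ Finset.range j, A x y) + A x j :=
    fun x => Finset.sum_range_succ _ _
  rw [Finset.sum_congr rfl (fun x _ => e x), Finset.sum_add_distrib]
  have : A i j ≤ ∑ x ∈ Finset.range (i+1), A x j :=
    Finset.single_le_sum (f := fun x => A x j) (fun _ _ => Nat.zero_le _)
      (Finset.mem_range.mpr (by omega))
  omega

theorem rsum_rect (A : ℕ → ℕ → ℕ) (i j : ℕ) :
    rsum A (i+1) (j+1) + rsum A i j = rsum A i (j+1) + rsum A (i+1) j + A i j := by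
  unfold rsum
  rw [Finset.sum_range_succ (f := fun x => ∑ y ∈ Finset.range (j+1), A x y),
    Finset.sum_range_succ (f := fun y => A i y),
    Finset.sum_range_succ (f := fun x => ∑ y ∈ Finset.range j, A x y)]
  omega

section GrowInv
variable {m : ℕ} {A : ℕ → ℕ → ℕ}
variable (hA : ∀ i j, ((i < m ∧ ¬ j < m) ∨ (¬ i < m ∧ j < m)) → A i j ≤ 1)
include hA

/-- the basic invariants of the growth diagram: each vertex is a partition with
controlled support, and horizontally adjacent vertices differ by a typed strip. -/
theorem grow_inv : ∀ i j, Anti (grow m A i j) ∧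
    Vn (grow m A i j) (i + j + rsum A i j) ∧
    grow m A i j 0 ≤ i + j + rsum A i j ∧
    Stp m j (grow m A i j) (grow m A i (j+1)) := by
  intro i
  induction i with
  | zero =>
    intro j
    rw [grow_zero, grow_zero]
    exact ⟨anti_zero, vn_zero _, Nat.zero_le _, Stp_zero m j⟩
  | succ i ih =>
    have W : ∀ j, (Anti (grow m A (i+1) j) ∧ Vn (grow m A (i+1) j) ((i+1) + j + rsum A (i+1) j) ∧
        grow m A (i+1) j 0 ≤ (i+1) + j + rsum A (i+1) j) ∧
        Stp m i (grow m A i j) (grow m A (i+1) j) := by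
      intro j
      induction j with
      | zero =>
        rw [grow_col0, grow_col0]
        exact ⟨⟨anti_zero, vn_zero _, Nat.zero_le _⟩, Stp_zero m i⟩
      | succ j ihj =>
        obtain ⟨⟨w1, w2, w3⟩, w4⟩ := ihj
        obtain ⟨b1, b2, b3, b4⟩ := ih j
        obtain ⟨c1, c2, c3, _⟩ := ih (j+1)
        have hb1 := rsum_add_tp A i j
        have hb2 := rsum_add_lf A i j
        have hb3 := rsum_mono A (le_refl i) (show j ≤ j+1 by omega)
        set t : ℕ := i + j + 1 + max (rsum A i (j+1)) (rsum A (i+1) j) with ht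
        have s := cellF_spec (m := m) i j (A i j) t b1 c1 w1 b4 w4
          (b2.mono (by omega)) (c2.mono (by omega)) (w2.mono (by omega))
          (le_trans c3 (by omega)) (le_trans w3 (by omega)) (hA i j)
        rw [← grow_succ] at s
        exact ⟨⟨s.1, s.2.2.2.1.mono (by omega), le_trans s.2.2.2.2.1 (by omega)⟩, s.2.1⟩
    intro j
    obtain ⟨⟨w1, w2, w3⟩, w4⟩ := W j
    refine ⟨w1, w2, w3, ?_⟩
    -- horizontal strip in row i+1 between columns j and j+1
    obtain ⟨b1, b2, b3, b4⟩ := ih j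
    obtain ⟨c1, c2, c3, _⟩ := ih (j+1)
    have hb1 := rsum_add_tp A i j
    have hb2 := rsum_add_lf A i j
    have hb3 := rsum_mono A (le_refl i) (show j ≤ j+1 by omega)
    set t : ℕ := i + j + 1 + max (rsum A i (j+1)) (rsum A (i+1) j) with ht
    have s := cellF_spec (m := m) i j (A i j) t b1 c1 w1 b4 w4
      (b2.mono (by omega)) (c2.mono (by omega)) (w2.mono (by omega))
      (le_trans c3 (by omega)) (le_trans w3 (by omega)) (hA i j)
    rw [← grow_succ] at s
    exact s.2.2.1

/-- vertically adjacent vertices differ by a typed strip. -/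
theorem grow_vert : ∀ i j, Stp m i (grow m A i j) (grow m A (i+1) j) := by
  intro i j
  induction j with
  | zero =>
    rw [grow_col0, grow_col0]
    exact Stp_zero m i
  | succ j ihj =>
    obtain ⟨b1, b2, b3, b4⟩ := grow_inv hA i j
    obtain ⟨c1, c2, c3, _⟩ := grow_inv hA i (j+1)
    obtain ⟨w1, w2, w3, _⟩ := grow_inv hA (i+1) j
    have hb1 := rsum_add_tp A i j
    have hb2 := rsum_add_lf A i j
    have hb3 := rsum_mono A (le_refl i) (show j ≤ j+1 by omega)
    set t : ℕ := i + j + 1 + max (rsum A i (j+1)) (rsum A (i+1) j) with ht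
    have s := cellF_spec (m := m) i j (A i j) t b1 c1 w1 b4 ihj
      (b2.mono (by omega)) (c2.mono (by omega)) (w2.mono (by omega))
      (le_trans c3 (by omega)) (le_trans w3 (by omega)) (hA i j)
    rw [← grow_succ] at s
    exact s.2.1

/-- the size of each vertex partition is the partial sum of matrix entries. -/
theorem grow_sz (R : ℕ) : ∀ i j, i + j + rsum A i j + 1 ≤ R →
    sz R (grow m A i j) = rsum A i j := by
  intro i
  induction i with
  | zero =>
    intro j _
    rw [grow_zero, rsum_zero_left]
    unfold sz
    simp
  | succ i ih =>
    intro j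
    induction j with
    | zero =>
      intro _
      rw [grow_col0, rsum_zero_right]
      unfold sz
      simp
    | succ j ihj =>
      intro hR
      obtain ⟨b1, b2, b3, b4⟩ := grow_inv hA i j
      obtain ⟨c1, c2, c3, _⟩ := grow_inv hA i (j+1)
      obtain ⟨w1, w2, w3, _⟩ := grow_inv hA (i+1) j
      have hv4 := grow_vert hA i j
      have hb1 := rsum_add_tp A i j
      have hb2 := rsum_add_lf A i j
      have hb3 := rsum_mono A (le_refl i) (show j ≤ j+1 by omega)
      have hrect := rsum_rect A i j
      set t : ℕ := i + j + 1 + max (rsum A i (j+1)) (rsum A (i+1) j) with ht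
      have s := cellF_spec (m := m) i j (A i j) t b1 c1 w1 b4 hv4
        (b2.mono (by omega)) (c2.mono (by omega)) (w2.mono (by omega))
        (le_trans c3 (by omega)) (le_trans w3 (by omega)) (hA i j)
      rw [← grow_succ] at s
      have hsz := s.2.2.2.2.2.1 R (by omega)
      have e1 : sz R (grow m A i j) = rsum A i j := ih j (by omega)
      have e2 : sz R (grow m A i (j+1)) = rsum A i (j+1) := ih (j+1) (by omega)
      have e3 : sz R (grow m A (i+1) j) = rsum A (i+1) j := ihj (by omega)
      omega

/-- the backward rules recover the matrix entry and the inner corner. -/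
theorem grow_bwd (i j : ℕ) :
    cellBa m i j (grow m A (i+1) (j+1)) (grow m A i (j+1)) (grow m A (i+1) j) = A i j ∧
    cellBρ m i j (grow m A (i+1) (j+1)) (grow m A i (j+1)) (grow m A (i+1) j)
      = grow m A i j := by
  obtain ⟨b1, b2, b3, b4⟩ := grow_inv hA i j
  obtain ⟨c1, c2, c3, _⟩ := grow_inv hA i (j+1)
  obtain ⟨w1, w2, w3, _⟩ := grow_inv hA (i+1) j
  have hv4 := grow_vert hA i j
  have hb1 := rsum_add_tp A i j
  have hb2 := rsum_add_lf A i j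
  have hb3 := rsum_mono A (le_refl i) (show j ≤ j+1 by omega)
  set t : ℕ := i + j + 1 + max (rsum A i (j+1)) (rsum A (i+1) j) with ht
  have s := cellF_spec (m := m) i j (A i j) t b1 c1 w1 b4 hv4
    (b2.mono (by omega)) (c2.mono (by omega)) (w2.mono (by omega))
    (le_trans c3 (by omega)) (le_trans w3 (by omega)) (hA i j)
  rw [← grow_succ] at s
  exact ⟨s.2.2.2.2.2.2.1, s.2.2.2.2.2.2.2⟩

end GrowInv

/-- growth diagram of the transposed matrix is the transposed growth diagram. -/
theorem grow_transpose (m : ℕ) (A B : ℕ → ℕ → ℕ) (h : ∀ i j, B i j = A j i) :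
    ∀ i j, grow m B i j = grow m A j i := by
  intro i
  induction i with
  | zero =>
    intro j
    rw [grow_zero, grow_col0]
  | succ i ih =>
    intro j
    induction j with
    | zero =>
      rw [grow_col0, grow_zero]
    | succ j ihj =>
      rw [grow_succ, grow_succ, h i j, ih j, ih (j+1), ihj, cellF_swap]


/-! ### From chains of partitions to supertableaux -/

noncomputable def chT (N : ℕ) (ch : ℕ → ℕ → ℕ) (x c : ℕ) : ℕ :=
  if h : c < ch N x then Nat.find (⟨N, h⟩ : ∃ e, c < ch e x) else 0

section ChainTab
variable {m n : ℕ} {ch : ℕ → ℕ → ℕ}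
variable (hch0 : ∀ x, ch 0 x = 0) (hanti : ∀ e, Anti (ch e))
variable (hstp : ∀ e, Stp m e (ch e) (ch (e+1)))
include hch0 hanti hstp

theorem ch_mono {e e' : ℕ} (h : e ≤ e') (x : ℕ) : ch e x ≤ ch e' x := by
  induction e' with
  | zero => have : e = 0 := by omega
            simp [this]
  | succ e' ih =>
    rcases Nat.lt_or_ge e (e'+1) with h'|h'
    · exact le_trans (ih (by omega)) ((hstp e').le x)
    · have : e = e' + 1 := by omega
      simp [this]

variable {x c : ℕ}

theorem chT_spec (h : c < ch (m+n) x) :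
    c < ch (chT (m+n) ch x c) x ∧ (∀ e, e < chT (m+n) ch x c → ¬ c < ch e x) ∧
    1 ≤ chT (m+n) ch x c ∧ chT (m+n) ch x c ≤ m + n := by
  unfold chT
  rw [dif_pos h]
  refine ⟨Nat.find_spec (⟨m+n, h⟩ : ∃ e, c < ch e x),
    fun e he => Nat.find_min (⟨m+n, h⟩ : ∃ e, c < ch e x) he, ?_, Nat.find_le h⟩
  rcases Nat.eq_zero_or_pos (Nat.find (⟨m+n, h⟩ : ∃ e, c < ch e x)) with h0|h0
  · exfalso
    have := Nat.find_spec (⟨m+n, h⟩ : ∃ e, c < ch e x)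
    rw [h0, hch0 x] at this
    omega
  · omega

theorem chT_le_iff (h : c < ch (m+n) x) (e : ℕ) :
    chT (m+n) ch x c ≤ e ↔ c < ch e x := by
  obtain ⟨s1, s2, s3, s4⟩ := chT_spec hch0 hanti hstp h
  constructor
  · intro he
    exact lt_of_lt_of_le s1 (ch_mono hch0 hanti hstp he x)
  · intro he
    by_contra hc
    exact s2 e (by omega) he

theorem chT_ssyt : isSuperSSYT m n (ch (m+n)) (chT (m+n) ch) := by
  refine ⟨?_, ?_, ?_, ?_, ?_⟩
  · -- entries in [1, m+n]
    intro x c hc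
    obtain ⟨s1, s2, s3, s4⟩ := chT_spec hch0 hanti hstp hc
    exact ⟨s3, s4⟩
  · -- rows weakly increasing
    intro x c c' hcc hc'
    have hc : c < ch (m+n) x := by omega
    rw [chT_le_iff hch0 hanti hstp hc]
    obtain ⟨s1, _, _, _⟩ := chT_spec hch0 hanti hstp hc'
    omega
  · -- columns weakly increasing
    intro x x' c hxx hc'
    have hc : c < ch (m+n) x := lt_of_lt_of_le hc' ((hanti (m+n)).le hxx)
    rw [chT_le_iff hch0 hanti hstp hc]
    obtain ⟨s1, _, _, _⟩ := chT_spec hch0 hanti hstp hc'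
    exact lt_of_lt_of_le s1 ((hanti _).le hxx)
  · -- strictly increasing down columns for small entries
    intro x x' c hxx hc' hsm
    obtain ⟨s1, s2, s3, s4⟩ := chT_spec hch0 hanti hstp hc'
    obtain ⟨x'', rfl⟩ : ∃ y, x' = y + 1 := ⟨x' - 1, by omega⟩
    obtain ⟨e', hE⟩ : ∃ y, chT (m+n) ch (x''+1) c = y + 1 :=
      ⟨chT (m+n) ch (x''+1) c - 1, by omega⟩
    have hes : e' < m := by omega
    have hhs : HS (ch e') (ch (e'+1)) := by
      have := hstp e'
      rwa [Stp_hs hes] at this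
    rw [hE] at s1
    have key : c < ch e' x := by
      have h1 : ch (e'+1) (x''+1) ≤ ch e' x'' := (hhs x'').2
      have h2 : ch e' x'' ≤ ch e' x := (hanti e').le (by omega)
      omega
    have hcx : c < ch (m+n) x := lt_of_lt_of_le key (ch_mono hch0 hanti hstp (by omega) x)
    have := (chT_le_iff hch0 hanti hstp hcx e').mpr key
    omega
  · -- strictly increasing along rows for big entries
    intro x c c' hcc hc' hbig
    have hc : c < ch (m+n) x := by omega
    obtain ⟨s1, s2, s3, s4⟩ := chT_spec hch0 hanti hstp hc
    obtain ⟨t1, t2, t3, t4⟩ := chT_spec hch0 hanti hstp hc'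
    have hle : chT (m+n) ch x c ≤ chT (m+n) ch x c' :=
      (chT_le_iff hch0 hanti hstp hc _).mpr (by omega)
    rcases Nat.lt_or_ge (chT (m+n) ch x c) (chT (m+n) ch x c') with h'|h'
    · exact h'
    exfalso
    have heq : chT (m+n) ch x c' = chT (m+n) ch x c := by omega
    obtain ⟨e', hE⟩ : ∃ y, chT (m+n) ch x c = y + 1 := ⟨chT (m+n) ch x c - 1, by omega⟩
    have hvs : VS (ch e') (ch (e'+1)) := by
      have := hstp e'
      rwa [Stp_vs (by omega)] at this
    have h1 : ch (e'+1) x ≤ ch e' x + 1 := (hvs x).2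
    have h2 : ¬ c < ch e' x := by
      apply s2
      omega
    have h3 : c' < ch (e'+1) x := by rw [heq, hE] at t1; exact t1
    omega

theorem chT_vanish (x c : ℕ) (h : ch (m+n) x ≤ c) : chT (m+n) ch x c = 0 := by
  unfold chT
  rw [dif_neg (by omega)]

end ChainTab


/-! ### From supertableaux to chains of partitions -/

theorem le_of_lt_imp {a b : ℕ} (h : ∀ c, c < a → c < b) : a ≤ b := by
  by_contra hc
  push_neg at hc
  exact absurd (h b hc) (by omega)

theorem downward_closed_eq_range {S : Finset ℕ}
    (h : ∀ a b : ℕ, a ≤ b → b ∈ S → a ∈ S) : S = Finset.range S.card := by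
  ext x
  simp only [Finset.mem_range]
  constructor
  · intro hx
    have hsub : Finset.range (x+1) ⊆ S := by
      intro y hy
      simp only [Finset.mem_range] at hy
      exact h y x (by omega) hx
    have := Finset.card_le_card hsub
    simp only [Finset.card_range] at this
    omega
  · intro hx
    by_contra hc
    have hsub : S ⊆ Finset.range x := by
      intro y hy
      simp only [Finset.mem_range]
      by_contra hy2
      exact hc (h x y (by omega) hy)
    have := Finset.card_le_card hsub
    simp only [Finset.card_range] at this
    omega

def tch (r : ℕ) (lam : ℕ → ℕ) (T : ℕ → ℕ → ℕ) (e x : ℕ) : ℕ :=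
  ((Finset.range r).filter (fun c => c < lam x ∧ T x c ≤ e)).card

section TabChain
variable {m n r : ℕ} {lam : ℕ → ℕ} {T : ℕ → ℕ → ℕ}
variable (hpart : isPartitionOf r lam)
variable (hvan : ∀ i j, lam i ≤ j → T i j = 0)
variable (hssyt : isSuperSSYT m n lam T)
include hpart hvan hssyt

theorem lam_le_r (x : ℕ) : lam x ≤ r := by
  obtain ⟨h1, h2, h3⟩ := hpart
  have hx0 : lam x ≤ lam 0 := h1 (Nat.zero_le x)
  rcases Nat.eq_zero_or_pos r with hr|hr
  · have h4 : lam r = 0 := h3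
    rw [hr] at h4
    omega
  · have : lam 0 ≤ ∑ i ∈ Finset.range r, lam i :=
      Finset.single_le_sum (f := fun i => lam i) (fun _ _ => Nat.zero_le _)
        (Finset.mem_range.mpr hr)
    omega

theorem lam_vn : Vn lam r := by
  intro k hk
  obtain ⟨h1, h2, h3⟩ := hpart
  have := h1 hk
  omega

theorem tch_mem_iff (e x c : ℕ) : c < tch r lam T e x ↔ (c < lam x ∧ T x c ≤ e) := by
  have hS : ((Finset.range r).filter (fun c => c < lam x ∧ T x c ≤ e))
      = Finset.range (tch r lam T e x) := by
    apply downward_closed_eq_range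
    intro a b hab hb
    simp only [Finset.mem_filter, Finset.mem_range] at hb ⊢
    obtain ⟨hb1, hb2, hb3⟩ := hb
    refine ⟨by omega, by omega, ?_⟩
    exact le_trans (hssyt.2.1 x a b hab hb2) hb3
  constructor
  · intro hc
    have : c ∈ Finset.range (tch r lam T e x) := Finset.mem_range.mpr hc
    rw [← hS] at this
    simp only [Finset.mem_filter, Finset.mem_range] at this
    exact ⟨this.2.1, this.2.2⟩
  · intro ⟨hc1, hc2⟩
    have hcr : c < r := lt_of_lt_of_le hc1 (lam_le_r hpart hvan hssyt x)
    have : c ∈ (Finset.range r).filter (fun c => c < lam x ∧ T x c ≤ e) := by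
      simp only [Finset.mem_filter, Finset.mem_range]
      exact ⟨hcr, hc1, hc2⟩
    rw [hS] at this
    exact Finset.mem_range.mp this

theorem tch_zero (x : ℕ) : tch r lam T 0 x = 0 := by
  by_contra hc
  have h0 : 0 < tch r lam T 0 x := by omega
  rw [tch_mem_iff hpart hvan hssyt] at h0
  have := (hssyt.1 x 0 h0.1).1
  omega

theorem tch_anti (e : ℕ) : Anti (tch r lam T e) := by
  intro x
  apply le_of_lt_imp
  intro c hc
  rw [tch_mem_iff hpart hvan hssyt] at hc ⊢
  obtain ⟨hc1, hc2⟩ := hc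
  have h1 : c < lam x := lt_of_lt_of_le hc1 (hpart.1 (by omega))
  exact ⟨h1, le_trans (hssyt.2.2.1 x (x+1) c (by omega) hc1) hc2⟩

theorem tch_top (x : ℕ) : tch r lam T (m+n) x = lam x := by
  apply le_antisymm
  · apply le_of_lt_imp
    intro c hc
    exact ((tch_mem_iff hpart hvan hssyt _ x c).mp hc).1
  · apply le_of_lt_imp
    intro c hc
    rw [tch_mem_iff hpart hvan hssyt]
    exact ⟨hc, (hssyt.1 x c hc).2⟩

theorem tch_stp (e : ℕ) : Stp m e (tch r lam T e) (tch r lam T (e+1)) := by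
  by_cases he : e < m
  · rw [Stp_hs he]
    intro x
    constructor
    · apply le_of_lt_imp
      intro c hc
      rw [tch_mem_iff hpart hvan hssyt] at hc ⊢
      exact ⟨hc.1, by omega⟩
    · apply le_of_lt_imp
      intro c hc
      rw [tch_mem_iff hpart hvan hssyt] at hc ⊢
      obtain ⟨hc1, hc2⟩ := hc
      refine ⟨lt_of_lt_of_le hc1 (hpart.1 (by omega)), ?_⟩
      have := hssyt.2.2.2.1 x (x+1) c (by omega) hc1 (by omega)
      omega
  · rw [Stp_vs he]
    intro x
    constructor
    · apply le_of_lt_imp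
      intro c hc
      rw [tch_mem_iff hpart hvan hssyt] at hc ⊢
      exact ⟨hc.1, by omega⟩
    · -- at most one new cell per row
      have hsub : (Finset.range r).filter (fun c => c < lam x ∧ T x c ≤ e + 1)
          ⊆ ((Finset.range r).filter (fun c => c < lam x ∧ T x c ≤ e)) ∪
            ((Finset.range r).filter (fun c => c < lam x ∧ T x c = e + 1)) := by
        intro c hc
        simp only [Finset.mem_filter, Finset.mem_union, Finset.mem_range] at hc ⊢
        omega
      have hone : ((Finset.range r).filter (fun c => c < lam x ∧ T x c = e + 1)).card ≤ 1 := by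
        rw [Finset.card_le_one]
        intro a ha b hb
        simp only [Finset.mem_filter, Finset.mem_range] at ha hb
        by_contra hab
        rcases Nat.lt_or_ge a b with h|h
        · have := hssyt.2.2.2.2 x a b h hb.2.1 (by omega)
          omega
        · have hba : b < a := by omega
          have := hssyt.2.2.2.2 x b a hba ha.2.1 (by omega)
          omega
      have := Finset.card_union_le
        ((Finset.range r).filter (fun c => c < lam x ∧ T x c ≤ e))
        ((Finset.range r).filter (fun c => c < lam x ∧ T x c = e + 1))
      have hcard := Finset.card_le_card hsub
      unfold tch
      omega

/-- the hook condition: a super semistandard tableau has shape inside the `(m,n)` hook. -/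
theorem ssyt_hook : lam m ≤ n := by
  by_contra hc
  push_neg at hc
  -- every entry in row m is > m
  have hbig : ∀ c, c < lam m → m < T m c := by
    intro c hcm
    by_contra hsm
    push_neg at hsm
    -- entries strictly increase down column c within the first m+1 rows
    have key : ∀ x, x ≤ m → x + 1 ≤ T x c := by
      intro x
      induction x with
      | zero => intro _; exact (hssyt.1 0 c (lt_of_lt_of_le hcm (hpart.1 (Nat.zero_le m)))).1
      | succ x ih =>
        intro hxm
        have hcx : c < lam (x+1) := lt_of_lt_of_le hcm (hpart.1 hxm)
        have hTle : T (x+1) c ≤ T m c := by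
          rcases Nat.eq_or_lt_of_le hxm with h|h
          · rw [h]
          · exact hssyt.2.2.1 (x+1) m c hxm hcm
        have := hssyt.2.2.2.1 x (x+1) c (by omega) hcx (by omega)
        have := ih (by omega)
        omega
    have := key m le_rfl
    omega
  -- entries in row m strictly increase: T m c ≥ m + 1 + c
  have grow : ∀ c, c < lam m → m + 1 + c ≤ T m c := by
    intro c
    induction c with
    | zero => intro h; exact hbig 0 h
    | succ c ih =>
      intro h
      have h1 := hssyt.2.2.2.2 m c (c+1) (by omega) h (hbig c (by omega))
      have := ih (by omega)
      omega
  have := grow n hc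
  have := (hssyt.1 m n hc).2
  omega

end TabChain

/-- recover `isPartitionOf` from sizes. -/
theorem isPartitionOf_of_sz {f : ℕ → ℕ} {r R : ℕ} (hf : Anti f) (hR : r < R)
    (hsz : sz R f = r) : isPartitionOf r f := by
  have hanti : Antitone f := antitone_nat_of_succ_le hf
  have hvn : ∀ k, r ≤ k → f k = 0 := by
    intro k hk
    by_contra hc
    have hfr : 1 ≤ f r := by
      have := hf.le hk
      omega
    have h1 : ∀ i ∈ Finset.range (r+1), 1 ≤ f i := by
      intro i hi
      simp only [Finset.mem_range] at hi
      have := hf.le (show i ≤ r by omega)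
      omega
    have h2 : r + 1 ≤ ∑ i ∈ Finset.range (r+1), f i := by
      calc r + 1 = ∑ _i ∈ Finset.range (r+1), 1 := by simp
        _ ≤ ∑ i ∈ Finset.range (r+1), f i := Finset.sum_le_sum h1
    have h3 : ∑ i ∈ Finset.range (r+1), f i ≤ sz R f := by
      unfold sz
      exact Finset.sum_le_sum_of_subset (by simpa using Finset.range_subset_range.mpr (by omega : r + 1 ≤ R))
    unfold sz at *
    omega
  refine ⟨hanti, ?_, hvn r le_rfl⟩
  have : sz R f = sz r f + ∑ k ∈ Finset.Ico r R, f k := by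
    unfold sz
    rw [← Finset.sum_range_add_sum_Ico _ (by omega : r ≤ R)]
  have hz : ∑ k ∈ Finset.Ico r R, f k = 0 := by
    apply Finset.sum_eq_zero
    intro k hk
    simp only [Finset.mem_Ico] at hk
    exact hvn k hk.1
  unfold sz at *
  omega


/-! ### Backward growth: reconstructing the growth diagram from the boundary chains -/

noncomputable def bgrowRow (m N a : ℕ) (Ka : ℕ → ℕ → ℕ) (base : ℕ → ℕ) : ℕ → (ℕ → ℕ)
  | 0 => base
  | (b+1) => cellBρ m (N-(a+1)) (N-(b+1)) (Ka b) (bgrowRow m N a Ka base b) (Ka (b+1))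

noncomputable def bgrow (m N : ℕ) (θ φ : ℕ → ℕ → ℕ) : ℕ → ℕ → (ℕ → ℕ)
  | 0 => fun b => θ (N - b)
  | (a+1) => bgrowRow m N a (bgrow m N θ φ a) (φ (N - (a+1)))

theorem bgrow_zero (m N : ℕ) (θ φ : ℕ → ℕ → ℕ) (b : ℕ) :
    bgrow m N θ φ 0 b = θ (N - b) := rfl

theorem bgrow_row0 (m N : ℕ) (θ φ : ℕ → ℕ → ℕ) (a : ℕ) :
    bgrow m N θ φ (a+1) 0 = φ (N - (a+1)) := rfl

theorem bgrow_succ (m N : ℕ) (θ φ : ℕ → ℕ → ℕ) (a b : ℕ) :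
    bgrow m N θ φ (a+1) (b+1) = cellBρ m (N-(a+1)) (N-(b+1)) (bgrow m N θ φ a b)
      (bgrow m N θ φ (a+1) b) (bgrow m N θ φ a (b+1)) := rfl

theorem bgrow_congr (m N : ℕ) (θ φ θ' φ' : ℕ → ℕ → ℕ)
    (hθ : ∀ e, e ≤ N → θ e = θ' e) (hφ : ∀ e, e ≤ N → φ e = φ' e) :
    ∀ a b, bgrow m N θ φ a b = bgrow m N θ' φ' a b := by
  intro a
  induction a with
  | zero => intro b; rw [bgrow_zero, bgrow_zero, hθ _ (by omega)]
  | succ a ih =>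
    intro b
    induction b with
    | zero => rw [bgrow_row0, bgrow_row0, hφ _ (by omega)]
    | succ b ihb => rw [bgrow_succ, bgrow_succ, ih b, ih (b+1), ihb]

section BGrow
variable {m N t : ℕ} {θ φ : ℕ → ℕ → ℕ}
variable (hθa : ∀ e, Anti (θ e)) (hφa : ∀ e, Anti (φ e))
variable (hθs : ∀ e, Stp m e (θ e) (θ (e+1))) (hφs : ∀ e, Stp m e (φ e) (φ (e+1)))
variable (hθv : ∀ e, Vn (θ e) t) (hφv : ∀ e, Vn (φ e) t)
variable (hθ0 : ∀ e, θ e 0 ≤ t) (hφ0 : ∀ e, φ e 0 ≤ t)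
variable (hNN : θ N = φ N)
include hθa hφa hθs hφs hθv hφv hθ0 hφ0 hNN

/-- the vertical strip between rows `a+1` and `a` at `b = 0`. -/
theorem bgrow_vert0 (a : ℕ) (ha : a + 1 ≤ N) :
    Stp m (N-(a+1)) (bgrow m N θ φ (a+1) 0) (bgrow m N θ φ a 0) := by
  rw [bgrow_row0]
  have key : Stp m (N-(a+1)) (φ (N-(a+1))) (φ (N-a)) := by
    have e1 : N - a = (N-(a+1)) + 1 := by omega
    rw [e1]
    exact hφs (N-(a+1))
  rcases Nat.eq_zero_or_pos a with ha0|ha0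
  · subst ha0
    rw [bgrow_zero]
    simp only [Nat.sub_zero]
    rw [hNN]
    exact key
  · obtain ⟨a', rfl⟩ : ∃ y, a = y + 1 := ⟨a-1, by omega⟩
    rw [bgrow_row0]
    exact key

theorem bgrow_inv : ∀ a, a ≤ N → ∀ b, b ≤ N →
    Anti (bgrow m N θ φ a b) ∧ Vn (bgrow m N θ φ a b) t ∧ bgrow m N θ φ a b 0 ≤ t ∧
    (b + 1 ≤ N → Stp m (N-(b+1)) (bgrow m N θ φ a (b+1)) (bgrow m N θ φ a b)) := by
  intro a
  induction a with
  | zero =>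
    intro _ b hb
    rw [bgrow_zero]
    refine ⟨hθa _, hθv _, hθ0 _, fun hbN => ?_⟩
    rw [bgrow_zero]
    have e1 : N - b = (N - (b+1)) + 1 := by omega
    rw [e1]
    exact hθs (N-(b+1))
  | succ a ih =>
    intro haN
    have W : ∀ b, b ≤ N → (Anti (bgrow m N θ φ (a+1) b) ∧ Vn (bgrow m N θ φ (a+1) b) t ∧
        bgrow m N θ φ (a+1) b 0 ≤ t) ∧
        Stp m (N-(a+1)) (bgrow m N θ φ (a+1) b) (bgrow m N θ φ a b) := by
      intro b
      induction b with
      | zero =>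
        intro _
        refine ⟨?_, bgrow_vert0 hθa hφa hθs hφs hθv hφv hθ0 hφ0 hNN a haN⟩
        rw [bgrow_row0]
        exact ⟨hφa _, hφv _, hφ0 _⟩
      | succ b ihb =>
        intro hbN
        obtain ⟨⟨w1, w2, w3⟩, w4⟩ := ihb (by omega)
        obtain ⟨b1, b2, b3, b4⟩ := ih (by omega) b (by omega)
        obtain ⟨c1, c2, c3, _⟩ := ih (by omega) (b+1) hbN
        have s := cellB_spec (m := m) (N-(a+1)) (N-(b+1)) t b1 w1 c1 w4 (b4 hbN) b2 w2 c2 b3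
        rw [← bgrow_succ] at s
        exact ⟨⟨s.1, c2.of_le s.2.2.1.le, le_trans (s.2.2.1.le 0) c3⟩, s.2.2.1⟩
    intro b hb
    obtain ⟨⟨w1, w2, w3⟩, _⟩ := W b hb
    refine ⟨w1, w2, w3, fun hbN => ?_⟩
    obtain ⟨⟨v1, v2, v3⟩, v4⟩ := W b hb
    obtain ⟨b1, b2, b3, b4⟩ := ih (by omega) b (by omega)
    obtain ⟨c1, c2, c3, _⟩ := ih (by omega) (b+1) hbN
    have s := cellB_spec (m := m) (N-(a+1)) (N-(b+1)) t b1 v1 c1 v4 (b4 hbN) b2 w2 c2 b3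
    rw [← bgrow_succ] at s
    exact s.2.1

theorem bgrow_vert : ∀ a b, a + 1 ≤ N → b ≤ N →
    Stp m (N-(a+1)) (bgrow m N θ φ (a+1) b) (bgrow m N θ φ a b) := by
  intro a b
  induction b with
  | zero => intro ha _; exact bgrow_vert0 hθa hφa hθs hφs hθv hφv hθ0 hφ0 hNN a ha
  | succ b ihb =>
    intro ha hbN
    obtain ⟨b1, b2, b3, b4⟩ := bgrow_inv hθa hφa hθs hφs hθv hφv hθ0 hφ0 hNN a (by omega) b
      (by omega)
    obtain ⟨c1, c2, c3, _⟩ := bgrow_inv hθa hφa hθs hφs hθv hφv hθ0 hφ0 hNN a (by omega)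
      (b+1) hbN
    obtain ⟨w1, w2, w3, _⟩ := bgrow_inv hθa hφa hθs hφs hθv hφv hθ0 hφ0 hNN (a+1) ha b
      (by omega)
    have s := cellB_spec (m := m) (N-(a+1)) (N-(b+1)) t b1 w1 c1 (ihb ha (by omega)) (b4 hbN)
      b2 w2 c2 b3
    rw [← bgrow_succ] at s
    exact s.2.2.1

/-- the master backward-cell identities along the diagram. -/
theorem bgrow_spec (a b : ℕ) (ha : a + 1 ≤ N) (hb : b + 1 ≤ N) :
    ((((N-(a+1)) < m ∧ ¬ (N-(b+1)) < m) ∨ (¬ (N-(a+1)) < m ∧ (N-(b+1)) < m)) →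
      cellBa m (N-(a+1)) (N-(b+1)) (bgrow m N θ φ a b) (bgrow m N θ φ (a+1) b)
        (bgrow m N θ φ a (b+1)) ≤ 1) ∧
    cellF m (N-(a+1)) (N-(b+1))
      (cellBa m (N-(a+1)) (N-(b+1)) (bgrow m N θ φ a b) (bgrow m N θ φ (a+1) b)
        (bgrow m N θ φ a (b+1)))
      (bgrow m N θ φ (a+1) (b+1)) (bgrow m N θ φ (a+1) b) (bgrow m N θ φ a (b+1))
      = bgrow m N θ φ a b := by
  obtain ⟨b1, b2, b3, b4⟩ := bgrow_inv hθa hφa hθs hφs hθv hφv hθ0 hφ0 hNN a (by omega) b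
    (by omega)
  obtain ⟨c1, c2, c3, _⟩ := bgrow_inv hθa hφa hθs hφs hθv hφv hθ0 hφ0 hNN a (by omega)
    (b+1) hb
  obtain ⟨w1, w2, w3, _⟩ := bgrow_inv hθa hφa hθs hφs hθv hφv hθ0 hφ0 hNN (a+1) ha b
    (by omega)
  have hv := bgrow_vert hθa hφa hθs hφs hθv hφv hθ0 hφ0 hNN a b ha (by omega)
  have s := cellB_spec (m := m) (N-(a+1)) (N-(b+1)) t b1 w1 c1 hv (b4 hb) b2 w2 c2 b3
  rw [← bgrow_succ] at s
  exact ⟨s.2.2.2.1, s.2.2.2.2⟩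

theorem bgrow_lastrow (hφz : φ 0 = fun _ => 0) (hθz : θ 0 = fun _ => 0) :
    ∀ b, b ≤ N → bgrow m N θ φ N b = fun _ => 0 := by
  intro b
  induction b with
  | zero =>
    intro _
    rcases Nat.eq_zero_or_pos N with h0|h0
    · rw [h0, bgrow_zero]
      simpa using hθz
    · obtain ⟨N', hN'⟩ : ∃ y, N = y + 1 := ⟨N-1, by omega⟩
      rw [hN', bgrow_row0, ← hN']
      have : N - N = 0 := by omega
      rw [this]
      exact hφz
  | succ b ihb =>
    intro hbN
    obtain ⟨b1, _, _, b4⟩ := bgrow_inv hθa hφa hθs hφs hθv hφv hθ0 hφ0 hNN N (le_refl N) b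
      (by omega)
    have hle := (b4 hbN).le
    rw [ihb (by omega)] at hle
    funext k
    simpa using hle k

theorem bgrow_lastcol (hφz : φ 0 = fun _ => 0) (hθz : θ 0 = fun _ => 0) :
    ∀ a, a ≤ N → bgrow m N θ φ a N = fun _ => 0 := by
  intro a
  induction a with
  | zero =>
    intro _
    rw [bgrow_zero]
    have : N - N = 0 := by omega
    rw [this]
    exact hθz
  | succ a iha =>
    intro haN
    have hv := bgrow_vert hθa hφa hθs hφs hθv hφv hθ0 hφ0 hNN a N haN (le_refl N)
    have hle := hv.le
    rw [iha (by omega)] at hle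
    funext k
    simpa using hle k

/-- forward growth of the reconstructed matrix reproduces the backward diagram. -/
theorem bgrow_recon (A : ℕ → ℕ → ℕ)
    (hAdef : ∀ i j, i < N → j < N → A i j = cellBa m i j
      (bgrow m N θ φ (N-i-1) (N-j-1)) (bgrow m N θ φ (N-i) (N-j-1))
      (bgrow m N θ φ (N-i-1) (N-j)))
    (hφz : φ 0 = fun _ => 0) (hθz : θ 0 = fun _ => 0) :
    ∀ i, i ≤ N → ∀ j, j ≤ N → grow m A i j = bgrow m N θ φ (N-i) (N-j) := by
  intro i
  induction i with
  | zero =>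
    intro _ j hj
    rw [grow_zero]
    simp only [Nat.sub_zero]
    exact (bgrow_lastrow hθa hφa hθs hφs hθv hφv hθ0 hφ0 hNN hφz hθz (N-j) (by omega)).symm
  | succ i ihi =>
    intro hiN j
    induction j with
    | zero =>
      intro _
      rw [grow_col0]
      simp only [Nat.sub_zero]
      exact (bgrow_lastcol hθa hφa hθs hφs hθv hφv hθ0 hφ0 hNN hφz hθz (N-(i+1))
        (by omega)).symm
    | succ j ihj =>
      intro hjN
      rw [grow_succ, ihi (by omega) j (by omega), ihi (by omega) (j+1) hjN,
        ihj (by omega), hAdef i j (by omega) (by omega)]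
      have s := (bgrow_spec hθa hφa hθs hφs hθv hφv hθ0 hφ0 hNN (N-i-1) (N-j-1)
        (by omega) (by omega)).2
      have e1 : N - (N-i-1+1) = i := by omega
      have e2 : N - (N-j-1+1) = j := by omega
      have e3 : N - i - 1 + 1 = N - i := by omega
      have e4 : N - j - 1 + 1 = N - j := by omega
      rw [e1, e2, e3, e4] at s
      have e5 : N - (i+1) = N - i - 1 := by omega
      have e6 : N - (j+1) = N - j - 1 := by omega
      rw [e5, e6]
      exact s

end BGrow


/-! ### Glue lemmas -/

theorem isPartitionOf_sz {r R : ℕ} {lam : ℕ → ℕ} (h : isPartitionOf r lam) (hR : r ≤ R) :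
    sz R lam = r := by
  obtain ⟨h1, h2, h3⟩ := h
  have hvn : Vn lam r := by
    intro k hk
    have := h1 hk
    omega
  have : sz R lam = sz r lam := sz_congr_of_vn hvn hR le_rfl
  rw [this]
  exact h2

theorem chT_congr {N : ℕ} {ch ch' : ℕ → ℕ → ℕ} (h : ∀ e, e ≤ N → ch e = ch' e)
    (x c : ℕ) : chT N ch x c = chT N ch' x c := by
  unfold chT
  by_cases hc : c < ch N x
  · have hc' : c < ch' N x := by rw [← h N le_rfl]; exact hc
    rw [dif_pos hc, dif_pos hc']
    have l1 : Nat.find (⟨N, hc⟩ : ∃ e, c < ch e x) ≤ N := Nat.find_le hc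
    have l2 : Nat.find (⟨N, hc'⟩ : ∃ e, c < ch' e x) ≤ N := Nat.find_le hc'
    apply le_antisymm
    · apply Nat.find_le
      rw [h _ l2]
      exact Nat.find_spec (⟨N, hc'⟩ : ∃ e, c < ch' e x)
    · apply Nat.find_le
      rw [← h _ l1]
      exact Nat.find_spec (⟨N, hc⟩ : ∃ e, c < ch e x)
  · have hc' : ¬ c < ch' N x := by rw [← h N le_rfl]; exact hc
    rw [dif_neg hc, dif_neg hc']

section GlueA
variable {m n r : ℕ} {ch : ℕ → ℕ → ℕ}
variable (hch0 : ∀ x, ch 0 x = 0) (hanti : ∀ e, Anti (ch e))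
variable (hstp : ∀ e, Stp m e (ch e) (ch (e+1)))
variable (hpart : isPartitionOf r (ch (m+n)))
include hch0 hanti hstp hpart

/-- chain → tableau → chain roundtrip. -/
theorem tch_chT_eq (e : ℕ) (he : e ≤ m+n) :
    tch r (ch (m+n)) (chT (m+n) ch) e = ch e := by
  have hvan : ∀ i j, ch (m+n) i ≤ j → chT (m+n) ch i j = 0 := chT_vanish hch0 hanti hstp
  have hssyt : isSuperSSYT m n (ch (m+n)) (chT (m+n) ch) := chT_ssyt hch0 hanti hstp
  funext x
  apply le_antisymm
  · apply le_of_lt_imp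
    intro c hc
    rw [tch_mem_iff hpart hvan hssyt] at hc
    obtain ⟨hc1, hc2⟩ := hc
    exact (chT_le_iff hch0 hanti hstp hc1 e).mp hc2
  · apply le_of_lt_imp
    intro c hc
    rw [tch_mem_iff hpart hvan hssyt]
    have hcN : c < ch (m+n) x := lt_of_lt_of_le hc (ch_mono hch0 hanti hstp he x)
    exact ⟨hcN, (chT_le_iff hch0 hanti hstp hcN e).mpr hc⟩

end GlueA

section GlueB
variable {m n r : ℕ} {lam : ℕ → ℕ} {T : ℕ → ℕ → ℕ}
variable (hpart : isPartitionOf r lam)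
variable (hvan : ∀ i j, lam i ≤ j → T i j = 0)
variable (hssyt : isSuperSSYT m n lam T)
include hpart hvan hssyt

theorem tch_le_lam (e x : ℕ) : tch r lam T e x ≤ lam x := by
  apply le_of_lt_imp
  intro c hc
  exact ((tch_mem_iff hpart hvan hssyt e x c).mp hc).1

/-- tableau → chain → tableau roundtrip. -/
theorem chT_tch_eq (x c : ℕ) : chT (m+n) (tch r lam T) x c = T x c := by
  unfold chT
  by_cases h : c < tch r lam T (m+n) x
  · rw [dif_pos h]
    have hcl : c < lam x := ((tch_mem_iff hpart hvan hssyt _ x c).mp h).1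
    apply le_antisymm
    · apply Nat.find_le
      rw [tch_mem_iff hpart hvan hssyt]
      exact ⟨hcl, le_rfl⟩
    · by_contra hcon
      push_neg at hcon
      have hspec := Nat.find_spec (⟨m+n, h⟩ : ∃ e, c < tch r lam T e x)
      rw [tch_mem_iff hpart hvan hssyt] at hspec
      omega
  · rw [dif_neg h]
    rw [tch_top hpart hvan hssyt] at h
    exact (hvan x c (by omega)).symm

end GlueB

/-- backward growth of the boundary chains of a growth diagram recovers the diagram. -/
theorem bgrow_grow {m N : ℕ} {A : ℕ → ℕ → ℕ}
    (hA : ∀ i j, ((i < m ∧ ¬ j < m) ∨ (¬ i < m ∧ j < m)) → A i j ≤ 1) :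
    ∀ a b, a ≤ N → b ≤ N →
      bgrow m N (fun e => grow m A N e) (fun e => grow m A e N) a b
        = grow m A (N-a) (N-b) := by
  intro a
  induction a with
  | zero =>
    intro b _ _
    rw [bgrow_zero]
    simp only [Nat.sub_zero]
  | succ a iha =>
    intro b haN
    induction b with
    | zero =>
      intro _
      rw [bgrow_row0]
      simp only [Nat.sub_zero]
    | succ b ihb =>
      intro hbN
      rw [bgrow_succ, iha b (by omega) (by omega), iha (b+1) (by omega) hbN,
        ihb (by omega)]
      have s := (grow_bwd hA (N-a-1) (N-b-1)).2
      have e3 : N - a - 1 + 1 = N - a := by omega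
      have e4 : N - b - 1 + 1 = N - b := by omega
      rw [e3, e4] at s
      have e5 : N - (a+1) = N - a - 1 := by omega
      have e6 : N - (b+1) = N - b - 1 := by omega
      rw [e5, e6]
      exact s


/-! ### Assembling the bijection -/

section Assemble
variable (m n r : ℕ)

def matExt (A : Matrix (Fin (m+n)) (Fin (m+n)) ℕ) : ℕ → ℕ → ℕ :=
  fun i j => if h : i < m+n ∧ j < m+n then A ⟨i, h.1⟩ ⟨j, h.2⟩ else 0

theorem matExt_mix {A : Matrix (Fin (m+n)) (Fin (m+n)) ℕ}
    (hA : ∀ i j : Fin (m+n),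
      (((i:ℕ) < m ∧ ¬ (j:ℕ) < m) ∨ (¬ (i:ℕ) < m ∧ (j:ℕ) < m)) → A i j ≤ 1) :
    ∀ i j, ((i < m ∧ ¬ j < m) ∨ (¬ i < m ∧ j < m)) → matExt m n A i j ≤ 1 := by
  intro i j hmix
  unfold matExt
  split
  · next h => exact hA ⟨i, h.1⟩ ⟨j, h.2⟩ (by simpa using hmix)
  · omega

theorem matExt_apply (A : Matrix (Fin (m+n)) (Fin (m+n)) ℕ) (i j : Fin (m+n)) :
    matExt m n A ↑i ↑j = A i j := by
  unfold matExt
  rw [dif_pos ⟨i.isLt, j.isLt⟩]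

theorem matExt_rsum (A : Matrix (Fin (m+n)) (Fin (m+n)) ℕ) :
    rsum (matExt m n A) (m+n) (m+n) = ∑ i, ∑ j, A i j := by
  unfold rsum
  rw [← Fin.sum_univ_eq_sum_range (fun x => ∑ y ∈ Finset.range (m+n), matExt m n A x y) (m+n)]
  refine Finset.sum_congr rfl (fun i _ => ?_)
  rw [← Fin.sum_univ_eq_sum_range (fun y => matExt m n A ↑i y) (m+n)]
  exact Finset.sum_congr rfl (fun j _ => matExt_apply m n A i j)

/-- The forward (RSK-super) map. -/
noncomputable def Fmap (A : Mmn m n r) : SuperPairs m n r := by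
  refine ⟨(grow m (matExt m n A.val) (m+n) (m+n),
    chT (m+n) (fun e => grow m (matExt m n A.val) (m+n) e),
    chT (m+n) (fun e => grow m (matExt m n A.val) e (m+n))), ?_⟩
  have hmix := matExt_mix m n A.2.2
  have t0 : ∀ x, grow m (matExt m n A.val) (m+n) 0 x = 0 :=
    fun x => congrFun (grow_col0 m (matExt m n A.val) (m+n)) x
  have ta : ∀ e, Anti (grow m (matExt m n A.val) (m+n) e) :=
    fun e => (grow_inv hmix (m+n) e).1
  have ts : ∀ e, Stp m e (grow m (matExt m n A.val) (m+n) e)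
      (grow m (matExt m n A.val) (m+n) (e+1)) :=
    fun e => (grow_inv hmix (m+n) e).2.2.2
  have r0 : ∀ x, grow m (matExt m n A.val) 0 (m+n) x = 0 :=
    fun x => congrFun (grow_zero m (matExt m n A.val) (m+n)) x
  have ra : ∀ e, Anti (grow m (matExt m n A.val) e (m+n)) :=
    fun e => (grow_inv hmix e (m+n)).1
  have rs : ∀ e, Stp m e (grow m (matExt m n A.val) e (m+n))
      (grow m (matExt m n A.val) (e+1) (m+n)) :=
    fun e => grow_vert hmix e (m+n)
  have hrs : rsum (matExt m n A.val) (m+n) (m+n) = r := by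
    rw [matExt_rsum]; exact A.2.1
  have hsz : sz ((m+n)+(m+n)+r+1) (grow m (matExt m n A.val) (m+n) (m+n)) = r := by
    have h2 := grow_sz hmix ((m+n)+(m+n)+r+1) (m+n) (m+n) (by rw [hrs])
    rw [hrs] at h2
    exact h2
  have hpart : isPartitionOf r (grow m (matExt m n A.val) (m+n) (m+n)) :=
    isPartitionOf_of_sz ((grow_inv hmix (m+n) (m+n)).1) (by omega) hsz
  have hvanT := chT_vanish (m := m) (n := n) t0 ta ts
  have hssytT := chT_ssyt (m := m) (n := n) t0 ta ts
  have hvanS := chT_vanish (m := m) (n := n) r0 ra rs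
  have hssytS := chT_ssyt (m := m) (n := n) r0 ra rs
  exact ⟨hpart, ssyt_hook hpart hvanT hssytT, hvanT, hssytT, hvanS, hssytS⟩

end Assemble


section Assemble2
variable (m n r : ℕ)

theorem qprops (q : SuperPairs m n r) :
    (∀ e, Anti (tch r q.val.1 q.val.2.1 e)) ∧ (∀ e, Anti (tch r q.val.1 q.val.2.2 e)) ∧
    (∀ e, Stp m e (tch r q.val.1 q.val.2.1 e) (tch r q.val.1 q.val.2.1 (e+1))) ∧
    (∀ e, Stp m e (tch r q.val.1 q.val.2.2 e) (tch r q.val.1 q.val.2.2 (e+1))) ∧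
    (∀ e, Vn (tch r q.val.1 q.val.2.1 e) r) ∧ (∀ e, Vn (tch r q.val.1 q.val.2.2 e) r) ∧
    (∀ e, tch r q.val.1 q.val.2.1 e 0 ≤ r) ∧ (∀ e, tch r q.val.1 q.val.2.2 e 0 ≤ r) ∧
    tch r q.val.1 q.val.2.1 (m+n) = tch r q.val.1 q.val.2.2 (m+n) ∧
    tch r q.val.1 q.val.2.1 0 = (fun _ => 0) ∧ tch r q.val.1 q.val.2.2 0 = (fun _ => 0) := by
  obtain ⟨hpart, hook, hv1, hs1, hv2, hs2⟩ := q.2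
  have hlam_vn : Vn q.val.1 r := lam_vn hpart hv1 hs1
  have hlam_le : ∀ x, q.val.1 x ≤ r := lam_le_r hpart hv1 hs1
  refine ⟨fun e => tch_anti hpart hv1 hs1 e, fun e => tch_anti hpart hv2 hs2 e,
    fun e => tch_stp hpart hv1 hs1 e, fun e => tch_stp hpart hv2 hs2 e, ?_, ?_, ?_, ?_, ?_, ?_, ?_⟩
  · intro e k hk
    have h1 := tch_le_lam hpart hv1 hs1 e k
    have h2 := hlam_vn k hk
    omega
  · intro e k hk
    have h1 := tch_le_lam hpart hv2 hs2 e k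
    have h2 := hlam_vn k hk
    omega
  · intro e
    exact le_trans (tch_le_lam hpart hv1 hs1 e 0) (hlam_le 0)
  · intro e
    exact le_trans (tch_le_lam hpart hv2 hs2 e 0) (hlam_le 0)
  · funext x
    rw [tch_top hpart hv1 hs1, tch_top hpart hv2 hs2]
  · funext x
    exact tch_zero hpart hv1 hs1 x
  · funext x
    exact tch_zero hpart hv2 hs2 x

noncomputable def Kq (q : SuperPairs m n r) : ℕ → ℕ → (ℕ → ℕ) :=
  bgrow m (m+n) (tch r q.val.1 q.val.2.1) (tch r q.val.1 q.val.2.2)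

noncomputable def Bq (q : SuperPairs m n r) : Matrix (Fin (m+n)) (Fin (m+n)) ℕ :=
  fun i j => cellBa m ↑i ↑j (Kq m n r q (m+n-↑i-1) (m+n-↑j-1))
    (Kq m n r q (m+n-↑i) (m+n-↑j-1)) (Kq m n r q (m+n-↑i-1) (m+n-↑j))

theorem Bq_mix (q : SuperPairs m n r) (i j : Fin (m+n))
    (hm : ((↑i < m ∧ ¬ ↑j < m) ∨ (¬ ↑i < m ∧ (j:ℕ) < m))) : Bq m n r q i j ≤ 1 := by
  obtain ⟨p1, p2, p3, p4, p5, p6, p7, p8, p9, p10, p11⟩ := qprops m n r q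
  have hi := i.isLt
  have hj := j.isLt
  have s := (bgrow_spec p1 p2 p3 p4 p5 p6 p7 p8 p9 (m+n-↑i-1) (m+n-↑j-1)
    (by omega) (by omega)).1
  have e1 : m+n-(m+n-(i:ℕ)-1+1) = ↑i := by omega
  have e2 : m+n-(m+n-(j:ℕ)-1+1) = ↑j := by omega
  have e3 : m+n-(i:ℕ)-1+1 = m+n-↑i := by omega
  have e4 : m+n-(j:ℕ)-1+1 = m+n-↑j := by omega
  rw [e1, e2, e3, e4] at s
  exact s hm

theorem Bq_recon (q : SuperPairs m n r) :
    ∀ i, i ≤ m+n → ∀ j, j ≤ m+n →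
      grow m (matExt m n (Bq m n r q)) i j = Kq m n r q (m+n-i) (m+n-j) := by
  obtain ⟨p1, p2, p3, p4, p5, p6, p7, p8, p9, p10, p11⟩ := qprops m n r q
  apply bgrow_recon p1 p2 p3 p4 p5 p6 p7 p8 p9
  · intro i j hi hj
    unfold matExt
    rw [dif_pos ⟨hi, hj⟩]
    rfl
  · exact p11
  · exact p10

theorem Bq_sum (q : SuperPairs m n r) : ∑ i, ∑ j, Bq m n r q i j = r := by
  obtain ⟨hpart, hook, hv1, hs1, hv2, hs2⟩ := q.2
  have hmix := matExt_mix m n (Bq_mix m n r q)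
  set R := (m+n)+(m+n)+(rsum (matExt m n (Bq m n r q)) (m+n) (m+n))+r+1 with hR
  have h1 : sz R (grow m (matExt m n (Bq m n r q)) (m+n) (m+n))
      = rsum (matExt m n (Bq m n r q)) (m+n) (m+n) :=
    grow_sz hmix R (m+n) (m+n) (by omega)
  have h2 : grow m (matExt m n (Bq m n r q)) (m+n) (m+n) = q.val.1 := by
    rw [Bq_recon m n r q (m+n) le_rfl (m+n) le_rfl]
    unfold Kq
    have e0 : m+n-(m+n) = 0 := by omega
    rw [e0, bgrow_zero]
    simp only [Nat.sub_zero]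
    funext x
    exact tch_top hpart hv1 hs1 x
  have h3 : sz R q.val.1 = r := isPartitionOf_sz hpart (by omega)
  rw [h2, h3] at h1
  rw [← matExt_rsum m n (Bq m n r q)]
  omega

/-- The backward map. -/
noncomputable def Gmap (q : SuperPairs m n r) : Mmn m n r :=
  ⟨Bq m n r q, Bq_sum m n r q, fun i j h => Bq_mix m n r q i j h⟩

end Assemble2


section Assemble3
variable (m n r : ℕ)

theorem left_inv (A : Mmn m n r) : Gmap m n r (Fmap m n r A) = A := by
  have hmix := matExt_mix m n A.2.2
  have t0 : ∀ x, grow m (matExt m n A.val) (m+n) 0 x = 0 :=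
    fun x => congrFun (grow_col0 m (matExt m n A.val) (m+n)) x
  have ta : ∀ e, Anti (grow m (matExt m n A.val) (m+n) e) :=
    fun e => (grow_inv hmix (m+n) e).1
  have ts : ∀ e, Stp m e (grow m (matExt m n A.val) (m+n) e)
      (grow m (matExt m n A.val) (m+n) (e+1)) :=
    fun e => (grow_inv hmix (m+n) e).2.2.2
  have r0 : ∀ x, grow m (matExt m n A.val) 0 (m+n) x = 0 :=
    fun x => congrFun (grow_zero m (matExt m n A.val) (m+n)) x
  have ra : ∀ e, Anti (grow m (matExt m n A.val) e (m+n)) :=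
    fun e => (grow_inv hmix e (m+n)).1
  have rs : ∀ e, Stp m e (grow m (matExt m n A.val) e (m+n))
      (grow m (matExt m n A.val) (e+1) (m+n)) :=
    fun e => grow_vert hmix e (m+n)
  have hpart : isPartitionOf r ((Fmap m n r A).val.1) := (Fmap m n r A).2.1
  have hθ : ∀ e, e ≤ m+n →
      tch r (Fmap m n r A).val.1 (Fmap m n r A).val.2.1 e
        = grow m (matExt m n A.val) (m+n) e :=
    fun e he => tch_chT_eq t0 ta ts hpart e he
  have hφ : ∀ e, e ≤ m+n →
      tch r (Fmap m n r A).val.1 (Fmap m n r A).val.2.2 e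
        = grow m (matExt m n A.val) e (m+n) :=
    fun e he => tch_chT_eq r0 ra rs hpart e he
  have hK : ∀ a b, a ≤ m+n → b ≤ m+n →
      Kq m n r (Fmap m n r A) a b = grow m (matExt m n A.val) (m+n-a) (m+n-b) := by
    intro a b ha hb
    unfold Kq
    rw [bgrow_congr m (m+n) _ _ (fun e => grow m (matExt m n A.val) (m+n) e)
      (fun e => grow m (matExt m n A.val) e (m+n)) hθ hφ a b]
    exact bgrow_grow hmix a b ha hb
  apply Subtype.ext
  funext i j
  show Bq m n r (Fmap m n r A) i j = A.val i j
  unfold Bq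
  have hi := i.isLt
  have hj := j.isLt
  rw [hK (m+n-↑i-1) (m+n-↑j-1) (by omega) (by omega),
    hK (m+n-↑i) (m+n-↑j-1) (by omega) (by omega),
    hK (m+n-↑i-1) (m+n-↑j) (by omega) (by omega)]
  have e1 : m+n-(m+n-(i:ℕ)-1) = ↑i+1 := by omega
  have e2 : m+n-(m+n-(j:ℕ)-1) = ↑j+1 := by omega
  have e3 : m+n-(m+n-(i:ℕ)) = ↑i := by omega
  have e4 : m+n-(m+n-(j:ℕ)) = ↑j := by omega
  rw [e1, e2, e3, e4]
  rw [(grow_bwd hmix ↑i ↑j).1]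
  exact matExt_apply m n A.val i j

theorem right_inv (q : SuperPairs m n r) : Fmap m n r (Gmap m n r q) = q := by
  obtain ⟨hpart, hook, hv1, hs1, hv2, hs2⟩ := q.2
  obtain ⟨p1, p2, p3, p4, p5, p6, p7, p8, p9, p10, p11⟩ := qprops m n r q
  have hrecon := Bq_recon m n r q
  have hKa0 : ∀ a, a ≤ m+n → Kq m n r q a 0 = tch r q.val.1 q.val.2.2 (m+n-a) := by
    intro a ha
    cases a with
    | zero =>
      show bgrow m (m+n) _ _ 0 0 = _
      rw [bgrow_zero]
      simp only [Nat.sub_zero]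
      exact p9
    | succ a =>
      exact bgrow_row0 m (m+n) _ _ a
  have h1 : grow m (matExt m n (Bq m n r q)) (m+n) (m+n) = q.val.1 := by
    rw [hrecon (m+n) le_rfl (m+n) le_rfl]
    unfold Kq
    have e0 : m+n-(m+n) = 0 := by omega
    rw [e0, bgrow_zero]
    simp only [Nat.sub_zero]
    funext x
    exact tch_top hpart hv1 hs1 x
  have hchT : ∀ e, e ≤ m+n → grow m (matExt m n (Bq m n r q)) (m+n) e
      = tch r q.val.1 q.val.2.1 e := by
    intro e he
    rw [hrecon (m+n) le_rfl e he]
    unfold Kq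
    have e0 : m+n-(m+n) = 0 := by omega
    rw [e0, bgrow_zero]
    have e1 : m+n-(m+n-e) = e := by omega
    rw [e1]
  have hchS : ∀ e, e ≤ m+n → grow m (matExt m n (Bq m n r q)) e (m+n)
      = tch r q.val.1 q.val.2.2 e := by
    intro e he
    rw [hrecon e he (m+n) le_rfl]
    have e0 : m+n-(m+n) = 0 := by omega
    rw [e0, hKa0 (m+n-e) (by omega)]
    have e1 : m+n-(m+n-e) = e := by omega
    rw [e1]
  have c1 : (Fmap m n r (Gmap m n r q)).val.1 = q.val.1 := h1
  have c2 : (Fmap m n r (Gmap m n r q)).val.2.1 = q.val.2.1 := by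
    show chT (m+n) (fun e => grow m (matExt m n (Bq m n r q)) (m+n) e) = q.val.2.1
    funext x c
    rw [chT_congr (ch' := tch r q.val.1 q.val.2.1) (fun e he => hchT e he) x c]
    exact chT_tch_eq hpart hv1 hs1 x c
  have c3 : (Fmap m n r (Gmap m n r q)).val.2.2 = q.val.2.2 := by
    show chT (m+n) (fun e => grow m (matExt m n (Bq m n r q)) e (m+n)) = q.val.2.2
    funext x c
    rw [chT_congr (ch' := tch r q.val.1 q.val.2.2) (fun e he => hchS e he) x c]
    exact chT_tch_eq hpart hv2 hs2 x c
  apply Subtype.ext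
  rw [show (Fmap m n r (Gmap m n r q)).val
      = ((Fmap m n r (Gmap m n r q)).val.1, (Fmap m n r (Gmap m n r q)).val.2.1,
        (Fmap m n r (Gmap m n r q)).val.2.2) from rfl, c1, c2, c3]

theorem Fmap_transpose (A B : Mmn m n r) (h : B.val = A.val.transpose) :
    (Fmap m n r B).val.1 = (Fmap m n r A).val.1 ∧
    (Fmap m n r B).val.2.1 = (Fmap m n r A).val.2.2 ∧
    (Fmap m n r B).val.2.2 = (Fmap m n r A).val.2.1 := by
  have hext : ∀ i j, matExt m n B.val i j = matExt m n A.val j i := by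
    intro i j
    unfold matExt
    by_cases hi : i < m+n <;> by_cases hj : j < m+n
    · rw [dif_pos ⟨hi, hj⟩, dif_pos ⟨hj, hi⟩, h]
      rfl
    · rw [dif_neg (by tauto), dif_neg (by tauto)]
    · rw [dif_neg (by tauto), dif_neg (by tauto)]
    · rw [dif_neg (by tauto), dif_neg (by tauto)]
  have hg := grow_transpose m (matExt m n A.val) (matExt m n B.val) hext
  refine ⟨hg (m+n) (m+n), ?_, ?_⟩
  · show chT (m+n) (fun e => grow m (matExt m n B.val) (m+n) e)
        = chT (m+n) (fun e => grow m (matExt m n A.val) e (m+n))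
    have he : (fun e => grow m (matExt m n B.val) (m+n) e)
        = (fun e => grow m (matExt m n A.val) e (m+n)) := funext (fun e => hg (m+n) e)
    rw [he]
  · show chT (m+n) (fun e => grow m (matExt m n B.val) e (m+n))
        = chT (m+n) (fun e => grow m (matExt m n A.val) (m+n) e)
    have he : (fun e => grow m (matExt m n B.val) e (m+n))
        = (fun e => grow m (matExt m n A.val) (m+n) e) := funext (fun e => hg e (m+n))
    rw [he]

end Assemble3

end RSKSuper

/-- There is a bijection (the RSK super-correspondence) between `M(m|n,r)` and pairs
`(S, T)` of semistandard supertableaux of the same shape `ν`, where `ν` ranges over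
partitions of `r` in the `(m,n)`-hook; moreover if `A ↦ (S, T)` then `Aᵀ ↦ (T, S)`. -/
theorem stmt16 (m n r : ℕ) (hmn : 0 < m + n) :
    ∃ f : Mmn m n r ≃ SuperPairs m n r,
      ∀ A B : Mmn m n r,
        (B.val = A.val.transpose) →
          (f B).val.1 = (f A).val.1 ∧ (f B).val.2.1 = (f A).val.2.2 ∧
            (f B).val.2.2 = (f A).val.2.1 := by
  refine ⟨Equiv.mk (RSKSuper.Fmap m n r) (RSKSuper.Gmap m n r)
    (RSKSuper.left_inv m n r) (RSKSuper.right_inv m n r), ?_⟩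
  intro A B hB
  exact RSKSuper.Fmap_transpose m n r A B hB
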